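/- arXiv:2501.00496 — 11 statements merged into one kernel-verified Lean document; each statement's English description precedes it below -/
import Mathlib

section
/- In the sequent calculus LSkG for left skew monoidal closed logic, the stoup cut rule scut is admissible: given derivations of S | Γ ⊢ A and A | Δ ⊢ C, there is a derivation of S | Γ,Δ ⊢ C. -/
/-- Formulae of left skew monoidal closed logic: atoms, unit I, ⊗, ⊸. -/
inductive Fma : Type
  | atom : ℕ → Fma
  | I : Fma
  | tens : Fma → Fma → Fma
  | lolli : Fma → Fma → Fma

/-- Derivability in the stoup sequent calculus LSkG: `GDer S Γ A` means `S | Γ ⊢ A`. -/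
inductive GDer : Option Fma → List Fma → Fma → Prop
  | ax {A} : GDer (some A) [] A
  | lolliL {A B C Γ Δ} : GDer none Γ A → GDer (some B) Δ C →
      GDer (some (Fma.lolli A B)) (Γ ++ Δ) C
  | IL {Γ C} : GDer none Γ C → GDer (some Fma.I) Γ C
  | tensL {A B Γ C} : GDer (some A) (B :: Γ) C → GDer (some (Fma.tens A B)) Γ C
  | pass {A Γ C} : GDer (some A) Γ C → GDer none (A :: Γ) C
  | lolliR {S Γ A B} : GDer S (Γ ++ [A]) B → GDer S Γ (Fma.lolli A B)
  | IR : GDer none [] Fma.I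
  | tensR {S Γ Δ A B} : GDer S Γ A → GDer none Δ B → GDer S (Γ ++ Δ) (Fma.tens A B)

namespace ScutAux

/-- size of a formula -/
def sz : Fma → ℕ
  | Fma.atom _ => 1
  | Fma.I => 1
  | Fma.tens a b => sz a + sz b + 1
  | Fma.lolli a b => sz a + sz b + 1

lemma split_cons {α} {xs ys zs ws : List α} {a : α} (h : xs ++ ys = zs ++ a :: ws) :
    (∃ Ω, xs = zs ++ a :: Ω ∧ ws = Ω ++ ys) ∨ (∃ Ω, ys = Ω ++ a :: ws ∧ zs = xs ++ Ω) := by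
  rcases List.append_eq_append_iff.mp h with ⟨Ω, h1, h2⟩ | ⟨Ω, h1, h2⟩
  · exact Or.inr ⟨Ω, h2, h1⟩
  · cases Ω with
    | nil => exact Or.inr ⟨[], by simpa using h2.symm, by simp [h1]⟩
    | cons c Ω' =>
      injection h2 with h2a h2b
      subst h2a
      exact Or.inl ⟨Ω', h1, h2b⟩

/-- cut with unit on the left premise -/
lemma scutI {S Γ X} (f : GDer S Γ X) :
    ∀ {Δ C}, X = Fma.I → GDer none Δ C → GDer S (Γ ++ Δ) C := by
  induction f with
  | ax => intro Δ C hX g; subst hX; exact GDer.IL g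
  | lolliL f1 _ _ ih2 =>
    intro Δ C hX g; rw [List.append_assoc]; exact GDer.lolliL f1 (ih2 hX g)
  | IL _ ih => intro Δ C hX g; exact GDer.IL (ih hX g)
  | tensL _ ih => intro Δ C hX g; exact GDer.tensL (ih hX g)
  | pass _ ih => intro Δ C hX g; exact GDer.pass (ih hX g)
  | lolliR _ _ => intro _ _ hX _; exact Fma.noConfusion hX
  | IR => intro Δ C _ g; exact g
  | tensR _ _ _ _ => intro _ _ hX _; exact Fma.noConfusion hX

/-- cut with tensor on the left premise, given cut for the subformulas -/
lemma scutTens {a b : Fma}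
    (ihs : ∀ S Γ Δ C, GDer S Γ a → GDer (some a) Δ C → GDer S (Γ ++ Δ) C)
    (ihc : ∀ T Ξ C, GDer T Ξ C → ∀ Δ₀ Δ₁ Γ, Ξ = Δ₀ ++ b :: Δ₁ → GDer none Γ b →
      GDer T (Δ₀ ++ Γ ++ Δ₁) C)
    {S Γ X} (f : GDer S Γ X) :
    ∀ {Δ C}, X = Fma.tens a b → GDer (some a) (b :: Δ) C → GDer S (Γ ++ Δ) C := by
  induction f with
  | ax => intro Δ C hX g; subst hX; exact GDer.tensL g
  | lolliL f1 _ _ ih2 =>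
    intro Δ C hX g; rw [List.append_assoc]; exact GDer.lolliL f1 (ih2 hX g)
  | IL _ ih => intro Δ C hX g; exact GDer.IL (ih hX g)
  | tensL _ ih => intro Δ C hX g; exact GDer.tensL (ih hX g)
  | pass _ ih => intro Δ C hX g; exact GDer.pass (ih hX g)
  | lolliR _ _ => intro _ _ hX _; exact Fma.noConfusion hX
  | IR => intro _ _ hX _; exact Fma.noConfusion hX
  | tensR f1 f2 _ _ =>
    intro Δ C hX g
    injection hX with h1 h2
    subst h1; subst h2
    have h := ihc _ _ _ g [] Δ _ rfl f2
    rw [List.append_assoc]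
    exact ihs _ _ _ _ f1 (by simpa using h)

/-- cut with lolli on the left premise, given cut for the subformulas -/
lemma scutLolli {a b : Fma}
    (ihc : ∀ T Ξ C, GDer T Ξ C → ∀ Δ₀ Δ₁ Γ, Ξ = Δ₀ ++ a :: Δ₁ → GDer none Γ a →
      GDer T (Δ₀ ++ Γ ++ Δ₁) C)
    (ihs : ∀ S Γ Δ C, GDer S Γ b → GDer (some b) Δ C → GDer S (Γ ++ Δ) C)
    {S Γ X} (f : GDer S Γ X) :
    ∀ {Δ₁ Δ₂ C}, X = Fma.lolli a b → GDer none Δ₁ a → GDer (some b) Δ₂ C →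
      GDer S (Γ ++ (Δ₁ ++ Δ₂)) C := by
  induction f with
  | ax =>
    intro Δ₁ Δ₂ C hX g1 g2; subst hX
    rw [List.nil_append]; exact GDer.lolliL g1 g2
  | lolliL f1 _ _ ih2 =>
    intro Δ₁ Δ₂ C hX g1 g2; rw [List.append_assoc]; exact GDer.lolliL f1 (ih2 hX g1 g2)
  | IL _ ih => intro Δ₁ Δ₂ C hX g1 g2; exact GDer.IL (ih hX g1 g2)
  | tensL _ ih => intro Δ₁ Δ₂ C hX g1 g2; exact GDer.tensL (ih hX g1 g2)
  | pass _ ih => intro Δ₁ Δ₂ C hX g1 g2; exact GDer.pass (ih hX g1 g2)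
  | lolliR f _ =>
    intro Δ₁ Δ₂ C hX g1 g2
    injection hX with h1 h2
    subst h1; subst h2
    have h := ihc _ _ _ f _ [] Δ₁ rfl g1
    have h2 := ihs _ _ _ _ h g2
    simpa using h2
  | IR => intro _ _ _ hX _ _; exact Fma.noConfusion hX
  | tensR _ _ _ _ => intro _ _ _ hX _ _; exact Fma.noConfusion hX

theorem cut_all : ∀ (A : Fma),
    (∀ S Γ Δ C, GDer S Γ A → GDer (some A) Δ C → GDer S (Γ ++ Δ) C) ∧
    (∀ T Ξ C, GDer T Ξ C → ∀ Δ₀ Δ₁ Γ, Ξ = Δ₀ ++ A :: Δ₁ → GDer none Γ A →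
      GDer T (Δ₀ ++ Γ ++ Δ₁) C) := by
  suffices H : ∀ n A, sz A ≤ n →
      (∀ S Γ Δ C, GDer S Γ A → GDer (some A) Δ C → GDer S (Γ ++ Δ) C) ∧
      (∀ T Ξ C, GDer T Ξ C → ∀ Δ₀ Δ₁ Γ, Ξ = Δ₀ ++ A :: Δ₁ → GDer none Γ A →
        GDer T (Δ₀ ++ Γ ++ Δ₁) C) by
    exact fun A => H (sz A) A le_rfl
  intro n
  induction n with
  | zero => intro A h; cases A <;> simp [sz] at h
  | succ n ih =>
    intro A hA
    have hscut : ∀ S Γ Δ C, GDer S Γ A → GDer (some A) Δ C → GDer S (Γ ++ Δ) C := by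
      have key : ∀ T Δ C, GDer T Δ C → T = some A → ∀ S Γ, GDer S Γ A →
          GDer S (Γ ++ Δ) C := by
        intro T Δ C g
        induction g with
        | ax =>
          intro hT S Γ f
          injection hT with h; subst h
          simpa using f
        | @lolliL A₁ B₁ C₁ Γ₁ Δ' g1 g2 _ _ =>
          intro hT S Γ f
          injection hT with h; subst h
          have ha : sz A₁ ≤ n := by simp [sz] at hA; omega
          have hb : sz B₁ ≤ n := by simp [sz] at hA; omega
          exact scutLolli (ih _ ha).2 (ih _ hb).1 f rfl g1 g2
        | IL g' _ =>
          intro hT S Γ f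
          injection hT with h; subst h
          exact scutI f rfl g'
        | @tensL A₁ B₁ Γ₁ C₁ g' _ =>
          intro hT S Γ f
          injection hT with h; subst h
          have ha : sz A₁ ≤ n := by simp [sz] at hA; omega
          have hb : sz B₁ ≤ n := by simp [sz] at hA; omega
          exact scutTens (ih _ ha).1 (ih _ hb).2 f rfl g'
        | pass _ _ => intro hT; exact nomatch hT
        | lolliR _ ihg =>
          intro hT S Γ f
          apply GDer.lolliR
          rw [List.append_assoc]
          exact ihg hT _ _ f
        | IR => intro hT; exact nomatch hT
        | tensR g1 g2 ihg1 _ =>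
          intro hT S Γ f
          rw [← List.append_assoc]
          exact GDer.tensR (ihg1 hT _ _ f) g2
      exact fun S Γ Δ C f g => key _ _ _ g rfl S Γ f
    refine ⟨hscut, ?_⟩
    intro T Ξ C g
    induction g with
    | ax => intro Δ₀ Δ₁ Γ h f; exact absurd h (by cases Δ₀ <;> simp)
    | @lolliL A₂ B₂ C₂ Γ₂ Δ₂ g1 g2 ihg1 ihg2 =>
      intro Δ₀ Δ₁ Γ h f
      rcases split_cons h with ⟨Ω, h1, h2⟩ | ⟨Ω, h1, h2⟩
      · subst h2
        have e : Δ₀ ++ Γ ++ (Ω ++ Δ₂) = (Δ₀ ++ Γ ++ Ω) ++ Δ₂ := by simp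
        rw [e]
        exact GDer.lolliL (ihg1 Δ₀ Ω Γ h1 f) g2
      · subst h2
        have e : (Γ₂ ++ Ω) ++ Γ ++ Δ₁ = Γ₂ ++ (Ω ++ Γ ++ Δ₁) := by simp
        rw [e]
        exact GDer.lolliL g1 (ihg2 Ω Δ₁ Γ h1 f)
    | IL _ ihg => intro Δ₀ Δ₁ Γ h f; exact GDer.IL (ihg Δ₀ Δ₁ Γ h f)
    | tensL _ ihg =>
      intro Δ₀ Δ₁ Γ h f
      exact GDer.tensL (ihg (_ :: Δ₀) Δ₁ Γ (by rw [h]; rfl) f)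
    | pass g' ihg =>
      intro Δ₀ Δ₁ Γ h f
      cases Δ₀ with
      | nil =>
        injection h with h1 h2
        subst h1; subst h2
        exact hscut none Γ _ _ f g'
      | cons D Δ₀' =>
        injection h with h1 h2
        subst h1
        exact GDer.pass (ihg Δ₀' Δ₁ Γ h2 f)
    | @lolliR S₃ Γ₃ A₃ B₃ g' ihg =>
      intro Δ₀ Δ₁ Γ h f
      apply GDer.lolliR
      have h2 := ihg Δ₀ (Δ₁ ++ [A₃]) Γ (by rw [h]; simp) f
      simpa [List.append_assoc] using h2
    | IR => intro Δ₀ Δ₁ Γ h f; exact absurd h (by cases Δ₀ <;> simp)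
    | @tensR S₂ Γ₂ Δ₂ A₂ B₂ g1 g2 ihg1 ihg2 =>
      intro Δ₀ Δ₁ Γ h f
      rcases split_cons h with ⟨Ω, h1, h2⟩ | ⟨Ω, h1, h2⟩
      · subst h2
        have e : Δ₀ ++ Γ ++ (Ω ++ Δ₂) = (Δ₀ ++ Γ ++ Ω) ++ Δ₂ := by simp
        rw [e]
        exact GDer.tensR (ihg1 Δ₀ Ω Γ h1 f) g2
      · subst h2
        have e : (Γ₂ ++ Ω) ++ Γ ++ Δ₁ = Γ₂ ++ (Ω ++ Γ ++ Δ₁) := by simp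
        rw [e]
        exact GDer.tensR g1 (ihg2 Ω Δ₁ Γ h1 f)

end ScutAux

/-- Admissibility of the stoup cut rule `scut` in LSkG. -/
theorem scut_admissible (S : Option Fma) (Γ Δ : List Fma) (A C : Fma)
    (f : GDer S Γ A) (g : GDer (some A) Δ C) : GDer S (Γ ++ Δ) C :=
  (ScutAux.cut_all A).1 S Γ Δ C f g
end

section
/- In the sequent calculus LSkG, the context cut rule ccut is admissible: given derivations of - | Γ ⊢ A and S | Δ₀,A,Δ₁ ⊢ C, there is a derivation of S | Δ₀,Γ,Δ₁ ⊢ C. -/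
/-!
Context cut on `A` reduces to stoup cut on `A`: follow the occurrence of `A` up the right
derivation until `pass` moves it into an empty stoup. Stoup cut (`S | Γ ⊢ A` and `A | Δ ⊢ C`
give `S | Γ, Δ ⊢ C`) goes by induction on the left derivation, all of whose left rules and
`pass` commute with the cut. If `A` is introduced by a right rule, one inducts on the right
derivation, commuting past its right rules, until `A` is principal; the cut then becomes cuts on
immediate subformulas of `A`, so both cuts are admissible by induction on `A`.
-/

theorem List.append_cons_eq_append_iff {α : Type*} {l₁ l₂ r₁ r₂ : List α} {a : α} :
    l₁ ++ a :: l₂ = r₁ ++ r₂ ↔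
      (∃ t, r₁ = l₁ ++ a :: t ∧ l₂ = t ++ r₂) ∨ ∃ t, l₁ = r₁ ++ t ∧ r₂ = t ++ a :: l₂ := by
  rw [List.append_eq_append_iff]
  constructor
  · rintro (⟨_ | ⟨b, t⟩, rfl, h⟩ | h)
    · exact .inr ⟨[], by simp, by simpa using h.symm⟩
    · obtain ⟨rfl, rfl⟩ := List.cons_eq_cons.mp h
      exact .inl ⟨t, rfl, rfl⟩
    · exact .inr h
  · rintro (⟨t, rfl, rfl⟩ | h)
    · exact .inl ⟨a :: t, rfl, rfl⟩
    · exact .inr h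

namespace GDer

def StoupCut (A : Fma) : Prop :=
  ∀ {S Γ Δ C}, GDer S Γ A → GDer (some A) Δ C → GDer S (Γ ++ Δ) C

def ContextCut (A : Fma) : Prop :=
  ∀ {S Γ Δ₀ Δ₁ C}, GDer none Γ A → GDer S (Δ₀ ++ A :: Δ₁) C → GDer S (Δ₀ ++ Γ ++ Δ₁) C

theorem contextCut_of_stoupCut {A : Fma} (hA : StoupCut A) : ContextCut A := by
  intro S Γ Δ₀ Δ₁ C f g
  generalize hE : Δ₀ ++ A :: Δ₁ = E at g
  induction g generalizing Δ₀ Δ₁ with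
  | ax | IR => simp at hE
  | IL _ ih => exact IL (ih hE)
  | tensL _ ih => exact tensL (ih (Δ₀ := _ :: Δ₀) (by rw [← hE]; rfl))
  | @lolliR _ _ X _ _ ih =>
    exact lolliR (by simpa using ih (Δ₀ := Δ₀) (Δ₁ := Δ₁ ++ [X]) (by simp [← hE]))
  | pass g ih =>
    rcases Δ₀ with _ | ⟨_, Δ₀⟩
    · obtain ⟨rfl, rfl⟩ := List.cons_eq_cons.mp hE
      exact hA f g
    · obtain ⟨rfl, rfl⟩ := List.cons_eq_cons.mp hE
      exact pass (ih rfl)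
  | lolliL g₁ g₂ ih₁ ih₂ =>
    rcases List.append_cons_eq_append_iff.mp hE with ⟨t, rfl, rfl⟩ | ⟨t, rfl, rfl⟩
    · simpa using lolliL (ih₁ rfl) g₂
    · simpa using lolliL g₁ (ih₂ rfl)
  | tensR g₁ g₂ ih₁ ih₂ =>
    rcases List.append_cons_eq_append_iff.mp hE with ⟨t, rfl, rfl⟩ | ⟨t, rfl, rfl⟩
    · simpa using tensR (ih₁ rfl) g₂
    · simpa using tensR g₁ (ih₂ rfl)

theorem of_stoup_I {Δ : List Fma} {C : Fma} (g : GDer (some .I) Δ C) : GDer none Δ C := by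
  generalize hT : some Fma.I = T at g
  induction g with
  | ax => cases hT; exact IR
  | IL g => exact g
  | lolliR _ ih => exact lolliR (ih hT)
  | tensR _ g₂ ih₁ => exact tensR (ih₁ hT) g₂
  | lolliL | tensL | pass | IR => cases hT

theorem cut_of_lolliR {S : Option Fma} {Γ Δ : List Fma} {X B C : Fma}
    (hB : StoupCut B) (hX : ContextCut X)
    (f : GDer S (Γ ++ [X]) B) (g : GDer (some (.lolli X B)) Δ C) : GDer S (Γ ++ Δ) C := by
  generalize hT : some (Fma.lolli X B) = T at g
  induction g with
  | ax => cases hT; simpa using lolliR f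
  | lolliL g₁ g₂ =>
    cases hT
    simpa using hB (by simpa using hX g₁ f : GDer S (Γ ++ _) _) g₂
  | lolliR _ ih => exact lolliR (by simpa using ih hT)
  | tensR _ g₂ ih₁ => simpa using tensR (ih₁ hT) g₂
  | IL | tensL | pass | IR => cases hT

theorem cut_of_tensR {S : Option Fma} {Γ₁ Γ₂ Δ : List Fma} {X B C : Fma}
    (hX : StoupCut X) (hB : ContextCut B)
    (f₁ : GDer S Γ₁ X) (f₂ : GDer none Γ₂ B) (g : GDer (some (.tens X B)) Δ C) :
    GDer S (Γ₁ ++ Γ₂ ++ Δ) C := by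
  generalize hT : some (Fma.tens X B) = T at g
  induction g with
  | ax => cases hT; simpa using tensR f₁ f₂
  | tensL g =>
    cases hT
    simpa using hX f₁ (by simpa using hB (Δ₀ := []) f₂ g)
  | lolliR _ ih => exact lolliR (by simpa using ih hT)
  | tensR _ g₂ ih₁ => simpa using tensR (ih₁ hT) g₂
  | lolliL | IL | pass | IR => cases hT

/-- What the principal cases of a stoup cut on `A` reduce to. -/
def ComponentCuts : Fma → Prop
  | .lolli X B => StoupCut B ∧ ContextCut X
  | .tens X B => StoupCut X ∧ ContextCut B
  | _ => True

theorem stoupCut_of_componentCuts (A : Fma) (hA : ComponentCuts A) : StoupCut A := by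
  intro S Γ Δ C f g
  generalize hA₀ : A = A₀ at f
  induction f with
  | ax => subst hA₀; simpa using g
  | IL _ ih => exact IL (ih hA₀)
  | tensL _ ih => exact tensL (ih hA₀)
  | pass _ ih => exact pass (ih hA₀)
  | lolliL f₁ _ _ ih₂ => simpa using lolliL f₁ (ih₂ hA₀)
  | IR => subst hA₀; exact of_stoup_I g
  | lolliR f =>
    subst hA₀
    exact cut_of_lolliR hA.1 hA.2 f g
  | tensR f₁ f₂ =>
    subst hA₀
    exact cut_of_tensR hA.1 hA.2 f₁ f₂ g

theorem stoupCut : ∀ A, StoupCut A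
  | .atom n => stoupCut_of_componentCuts (.atom n) trivial
  | .I => stoupCut_of_componentCuts .I trivial
  | .lolli X B =>
    stoupCut_of_componentCuts (.lolli X B) ⟨stoupCut B, contextCut_of_stoupCut (stoupCut X)⟩
  | .tens X B =>
    stoupCut_of_componentCuts (.tens X B) ⟨stoupCut X, contextCut_of_stoupCut (stoupCut B)⟩

end GDer

/-- Admissibility of the context cut rule `ccut` in LSkG. -/
theorem ccut_admissible (S : Option Fma) (Γ Δ₀ Δ₁ : List Fma) (A C : Fma)
    (f : GDer none Γ A) (g : GDer S (Δ₀ ++ A :: Δ₁) C) :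
    GDer S (Δ₀ ++ Γ ++ Δ₁) C :=
  GDer.contextCut_of_stoupCut (GDer.stoupCut A) f g
end

section
/- In the tree sequent calculus LSkT, the cut rule is admissible: given derivations of U ⊢ A and T[A] ⊢ C, there is a derivation of T[U] ⊢ C. -/
/-- Trees: formulae, the empty tree, and pairing. -/
inductive Tr : Type
  | fma : Fma → Tr
  | emp : Tr
  | pair : Tr → Tr → Tr

/-- Contexts: trees with a single hole. -/
inductive Ctx : Type
  | hole : Ctx
  | pairL : Ctx → Tr → Ctx
  | pairR : Tr → Ctx → Ctx

/-- Substitution of a tree into the hole of a context. -/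
def plug : Ctx → Tr → Tr
  | Ctx.hole, U => U
  | Ctx.pairL C T, U => Tr.pair (plug C U) T
  | Ctx.pairR T C, U => Tr.pair T (plug C U)

/-- Derivability in the tree sequent calculus LSkT: `TDer T A` means `T ⊢ A`. -/
inductive TDer : Tr → Fma → Prop
  | ax {A} : TDer (Tr.fma A) A
  | IL {T C} : TDer (plug T Tr.emp) C → TDer (plug T (Tr.fma Fma.I)) C
  | IR : TDer Tr.emp Fma.I
  | tensL {T A B C} : TDer (plug T (Tr.pair (Tr.fma A) (Tr.fma B))) C →
      TDer (plug T (Tr.fma (Fma.tens A B))) C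
  | tensR {T U A B} : TDer T A → TDer U B → TDer (Tr.pair T U) (Fma.tens A B)
  | lolliL {T U A B C} : TDer U A → TDer (plug T (Tr.fma B)) C →
      TDer (plug T (Tr.pair (Tr.fma (Fma.lolli A B)) U)) C
  | lolliR {T A B} : TDer (Tr.pair T (Tr.fma A)) B → TDer T (Fma.lolli A B)
  | assoc {T U₀ U₁ U₂ C} : TDer (plug T (Tr.pair U₀ (Tr.pair U₁ U₂))) C →
      TDer (plug T (Tr.pair (Tr.pair U₀ U₁) U₂)) C
  | unitL {T U C} : TDer (plug T U) C → TDer (plug T (Tr.pair Tr.emp U)) C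
  | unitR {T U C} : TDer (plug T (Tr.pair U Tr.emp)) C → TDer (plug T U) C

/-!
Cut is eliminated by induction on the size of the cut formula `A` and, inside, by induction on
the derivation of `T[A] ⊢ C`. Given a rule ending that derivation and acting on a subtree `Y` of
its conclusion, the occurrence of `A` either lies beside `Y`, and the cut is permuted into the
premise, or inside `Y`. In the latter case `A` is principal in a left rule, or the structural
rule simply moves the occurrence. For a principal `A` one inducts on the derivation of `U ⊢ A`:
its left and structural rules act away from the cut and permute below it, until it ends in an
axiom or a right rule, where the cut splits into cuts on the immediate subformulas of `A`.
-/

namespace Ctx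

def comp : Ctx → Ctx → Ctx
  | hole, D => D
  | pairL C r, D => pairL (comp C D) r
  | pairR l C, D => pairR l (comp C D)

end Ctx

@[simp] theorem plug_comp (C D : Ctx) (t : Tr) : plug (C.comp D) t = plug C (plug D t) := by
  induction C <;> simp [Ctx.comp, plug, *]

theorem plug_eq_fma {T : Ctx} {x : Tr} {B : Fma} (h : plug T x = Tr.fma B) :
    T = Ctx.hole ∧ x = Tr.fma B := by
  cases T with
  | hole => exact ⟨rfl, h⟩
  | pairL | pairR => simp [plug] at h

/-- In the second case the two holes are disjoint: `F x` is the context of `A` once `Y` has been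
replaced by `x`, and `G y` is the context of `Y` once `A` has been replaced by `y`. -/
theorem plug_fma_eq_plug_cases {A : Fma} {Y : Tr} : ∀ {T S : Ctx},
    plug T (Tr.fma A) = plug S Y →
    (∃ D, T = S.comp D ∧ Y = plug D (Tr.fma A)) ∨
    ∃ F G : Tr → Ctx, (∀ x y, plug (F x) y = plug (G y) x) ∧ T = F Y ∧ S = G (Tr.fma A)
  | .hole, _, h => by
    obtain ⟨rfl, rfl⟩ := plug_eq_fma h.symm
    exact .inl ⟨.hole, rfl, rfl⟩
  | T, .hole, h => .inl ⟨T, rfl, h.symm⟩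
  | .pairL T r, .pairL S _, h => by
    simp only [plug, Tr.pair.injEq] at h
    obtain ⟨h, rfl⟩ := h
    rcases plug_fma_eq_plug_cases h with ⟨D, rfl, hY⟩ | ⟨F, G, hFG, rfl, rfl⟩
    · exact .inl ⟨D, rfl, hY⟩
    · exact .inr ⟨fun x => .pairL (F x) r, fun y => .pairL (G y) r,
        fun x y => by simp [plug, hFG], rfl, rfl⟩
  | .pairR l T, .pairR _ S, h => by
    simp only [plug, Tr.pair.injEq] at h
    obtain ⟨rfl, h⟩ := h
    rcases plug_fma_eq_plug_cases h with ⟨D, rfl, hY⟩ | ⟨F, G, hFG, rfl, rfl⟩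
    · exact .inl ⟨D, rfl, hY⟩
    · exact .inr ⟨fun x => .pairR l (F x), fun y => .pairR l (G y),
        fun x y => by simp [plug, hFG], rfl, rfl⟩
  | .pairL T _, .pairR _ S, h => by
    simp only [plug, Tr.pair.injEq] at h
    obtain ⟨rfl, rfl⟩ := h
    exact .inr ⟨fun x => .pairL T (plug S x), fun y => .pairR (plug T y) S,
      fun _ _ => rfl, rfl, rfl⟩
  | .pairR _ T, .pairL S _, h => by
    simp only [plug, Tr.pair.injEq] at h
    obtain ⟨rfl, rfl⟩ := h
    exact .inr ⟨fun x => .pairR (plug S x) T, fun y => .pairL S (plug T y),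
      fun _ _ => rfl, rfl, rfl⟩

inductive RightIntro : Tr → Fma → Prop
  | ax {A} : RightIntro (Tr.fma A) A
  | IR : RightIntro Tr.emp Fma.I
  | tensR {T U A B} : TDer T A → TDer U B → RightIntro (Tr.pair T U) (Fma.tens A B)
  | lolliR {T A B} : TDer (Tr.pair T (Tr.fma A)) B → RightIntro T (Fma.lolli A B)

def CutAdmissible (A : Fma) : Prop :=
  ∀ ⦃U C⦄ (T : Ctx), TDer U A → TDer (plug T (Tr.fma A)) C → TDer (plug T U) C

def CutsInto (U : Tr) (A : Fma) (V : Tr) (C : Fma) : Prop :=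
  ∀ T : Ctx, V = plug T (Tr.fma A) → TDer (plug T U) C

namespace TDer

theorem plug_of_rightIntro {U : Tr} {A : Fma} {T : Ctx} {C : Fma} (f : TDer U A)
    (h : ∀ V, RightIntro V A → TDer (plug T V) C) : TDer (plug T U) C := by
  induction f with
  | ax => exact h _ .ax
  | IR => exact h _ .IR
  | tensR f₁ f₂ => exact h _ (.tensR f₁ f₂)
  | lolliR f => exact h _ (.lolliR f)
  | IL _ ih => simpa using IL (T := T.comp _) (by simpa using ih h)
  | tensL _ ih => simpa using tensL (T := T.comp _) (by simpa using ih h)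
  | lolliL f₁ _ _ ih => simpa using lolliL (T := T.comp _) f₁ (by simpa using ih h)
  | assoc _ ih => simpa using assoc (T := T.comp _) (by simpa using ih h)
  | unitL _ ih => simpa using unitL (T := T.comp _) (by simpa using ih h)
  | unitR _ ih => simpa using unitR (T := T.comp _) (by simpa using ih h)

theorem cut_I {U : Tr} {T : Ctx} {C : Fma} (f : TDer U Fma.I) (p : TDer (plug T Tr.emp) C) :
    TDer (plug T U) C :=
  f.plug_of_rightIntro fun _ hV => by
    cases hV with
    | ax => exact IL p
    | IR => exact p

theorem cut_tens {A B : Fma} {U : Tr} {T : Ctx} {C : Fma} (hA : CutAdmissible A)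
    (hB : CutAdmissible B) (f : TDer U (A.tens B))
    (p : TDer (plug T (Tr.pair (Tr.fma A) (Tr.fma B))) C) : TDer (plug T U) C :=
  f.plug_of_rightIntro fun _ hV => by
    cases hV with
    | ax => exact tensL p
    | tensR f₁ f₂ =>
      have p₁ := hA (T.comp (.pairL .hole (.fma B))) f₁ (by simpa [plug] using p)
      simpa [plug] using hB (T.comp (.pairR _ .hole)) f₂ (by simpa [plug] using p₁)

theorem cut_lolli {A B : Fma} {U V : Tr} {T : Ctx} {C : Fma} (hA : CutAdmissible A)
    (hB : CutAdmissible B) (f : TDer U (A.lolli B)) (g₁ : TDer V A)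
    (g₂ : TDer (plug T (Tr.fma B)) C) : TDer (plug T (Tr.pair U V)) C := by
  simpa [plug] using f.plug_of_rightIntro (T := T.comp (.pairL .hole V)) fun W hW => by
    cases hW with
    | ax => simpa [plug] using lolliL g₁ g₂
    | lolliR f' => simpa [plug] using hB T (hA (.pairR W .hole) g₁ f') g₂

end TDer

section CutsInto

variable {U : Tr} {A : Fma} {S : Ctx} {C : Fma}

theorem cutsInto_plug {X Y : Tr} (rule : ∀ S', TDer (plug S' X) C → TDer (plug S' Y) C)
    (ih : CutsInto U A (plug S X) C)
    (inside : ∀ D, Y = plug D (Tr.fma A) → TDer (plug S (plug D U)) C) :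
    CutsInto U A (plug S Y) C := by
  intro T hT
  rcases plug_fma_eq_plug_cases hT.symm with ⟨D, rfl, hY⟩ | ⟨F, G, hFG, rfl, rfl⟩
  · rw [plug_comp]
    exact inside D hY
  · have h := ih (F X) (hFG X (.fma A)).symm
    rw [hFG] at h ⊢
    exact rule _ h

theorem cutsInto_ax (f : TDer U A) {B : Fma} : CutsInto U A (Tr.fma B) B := by
  intro T hT
  obtain ⟨rfl, h⟩ := plug_eq_fma hT.symm
  cases h
  exact f

theorem cutsInto_IL (f : TDer U A) (p : TDer (plug S Tr.emp) C)
    (ih : CutsInto U A (plug S Tr.emp) C) :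
    CutsInto U A (plug S (Tr.fma Fma.I)) C :=
  cutsInto_plug (fun _ => TDer.IL) ih fun D hD => by
    obtain ⟨rfl, h⟩ := plug_eq_fma hD.symm
    cases h
    exact f.cut_I p

theorem cutsInto_tensL (hsub : ∀ B : Fma, sizeOf B < sizeOf A → CutAdmissible B)
    (f : TDer U A) {A₁ A₂ : Fma} (p : TDer (plug S (Tr.pair (Tr.fma A₁) (Tr.fma A₂))) C)
    (ih : CutsInto U A (plug S (Tr.pair (Tr.fma A₁) (Tr.fma A₂))) C) :
    CutsInto U A (plug S (Tr.fma (A₁.tens A₂))) C :=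
  cutsInto_plug (fun _ => TDer.tensL) ih fun D hD => by
    obtain ⟨rfl, h⟩ := plug_eq_fma hD.symm
    cases h
    exact f.cut_tens (hsub _ (by simp +arith)) (hsub _ (by simp +arith)) p

theorem cutsInto_tensR {V₁ V₂ : Tr} {B₁ B₂ : Fma} (g₁ : TDer V₁ B₁) (g₂ : TDer V₂ B₂)
    (ih₁ : CutsInto U A V₁ B₁) (ih₂ : CutsInto U A V₂ B₂) :
    CutsInto U A (Tr.pair V₁ V₂) (B₁.tens B₂) := by
  intro T hT
  cases T with
  | hole => cases hT
  | pairL T _ =>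
    simp only [plug, Tr.pair.injEq] at hT
    obtain ⟨hT, rfl⟩ := hT
    exact .tensR (ih₁ T hT) g₂
  | pairR _ T =>
    simp only [plug, Tr.pair.injEq] at hT
    obtain ⟨rfl, hT⟩ := hT
    exact .tensR g₁ (ih₂ T hT)

theorem cutsInto_lolliL (hsub : ∀ B : Fma, sizeOf B < sizeOf A → CutAdmissible B)
    (f : TDer U A) {V : Tr} {A₁ A₂ : Fma} (g₁ : TDer V A₁) (g₂ : TDer (plug S (Tr.fma A₂)) C)
    (ih₁ : CutsInto U A V A₁) (ih₂ : CutsInto U A (plug S (Tr.fma A₂)) C) :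
    CutsInto U A (plug S (Tr.pair (Tr.fma (A₁.lolli A₂)) V)) C :=
  cutsInto_plug (fun _ => TDer.lolliL g₁) ih₂ fun D hD => by
    cases D with
    | hole => cases hD
    | pairL D _ =>
      simp only [plug, Tr.pair.injEq] at hD
      obtain ⟨hD, rfl⟩ := hD
      obtain ⟨rfl, h⟩ := plug_eq_fma hD.symm
      cases h
      exact f.cut_lolli (hsub _ (by simp +arith)) (hsub _ (by simp +arith)) g₁ g₂
    | pairR _ D =>
      simp only [plug, Tr.pair.injEq] at hD
      obtain ⟨rfl, hD⟩ := hD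
      exact .lolliL (ih₁ D hD) g₂

theorem cutsInto_lolliR {V : Tr} {B₁ B₂ : Fma} (ih : CutsInto U A (Tr.pair V (Tr.fma B₁)) B₂) :
    CutsInto U A V (B₁.lolli B₂) :=
  fun T hT => .lolliR (ih (.pairL T _) (by rw [hT]; rfl))

theorem cutsInto_assoc {U₀ U₁ U₂ : Tr} (ih : CutsInto U A (plug S (Tr.pair U₀ (Tr.pair U₁ U₂))) C) :
    CutsInto U A (plug S (Tr.pair (Tr.pair U₀ U₁) U₂)) C :=
  cutsInto_plug (fun _ => TDer.assoc) ih fun D hD => by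
    rcases D with _ | ⟨_ | ⟨D, _⟩ | ⟨_, D⟩, _⟩ | ⟨_, D⟩ <;>
      simp only [plug, Tr.pair.injEq, reduceCtorEq, false_and] at hD
    · obtain ⟨⟨rfl, rfl⟩, rfl⟩ := hD
      exact .assoc (by simpa [plug] using ih (S.comp (.pairL D (.pair U₁ U₂))) (by simp [plug]))
    · obtain ⟨⟨rfl, rfl⟩, rfl⟩ := hD
      exact .assoc (by simpa [plug] using ih (S.comp (.pairR U₀ (.pairL D U₂))) (by simp [plug]))
    · obtain ⟨rfl, rfl⟩ := hD
      exact .assoc (by simpa [plug] using ih (S.comp (.pairR U₀ (.pairR U₁ D))) (by simp [plug]))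

theorem cutsInto_unitL {V : Tr} (ih : CutsInto U A (plug S V) C) :
    CutsInto U A (plug S (Tr.pair Tr.emp V)) C :=
  cutsInto_plug (fun _ => TDer.unitL) ih fun D hD => by
    rcases D with _ | ⟨D, _⟩ | ⟨_, D⟩ <;> simp only [plug, Tr.pair.injEq, reduceCtorEq] at hD
    · cases D <;> simp [plug] at hD
    · obtain ⟨rfl, rfl⟩ := hD
      exact .unitL (by simpa using ih (S.comp D) (by simp +arith))

theorem cutsInto_unitR {V : Tr} (ih : CutsInto U A (plug S (Tr.pair V Tr.emp)) C) :
    CutsInto U A (plug S V) C :=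
  cutsInto_plug (fun _ => TDer.unitR) ih fun D hD =>
    .unitR (by simpa [plug] using ih (S.comp (.pairL D .emp)) (by simp [plug, hD]))

theorem TDer.cutsInto (hsub : ∀ B : Fma, sizeOf B < sizeOf A → CutAdmissible B)
    (f : TDer U A) {V : Tr} (g : TDer V C) : CutsInto U A V C := by
  induction g with
  | ax => exact cutsInto_ax f
  | IR => intro T hT; cases T <;> cases hT
  | IL p ih => exact cutsInto_IL f p ih
  | tensL p ih => exact cutsInto_tensL hsub f p ih
  | tensR g₁ g₂ ih₁ ih₂ => exact cutsInto_tensR g₁ g₂ ih₁ ih₂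
  | lolliL g₁ g₂ ih₁ ih₂ => exact cutsInto_lolliL hsub f g₁ g₂ ih₁ ih₂
  | lolliR _ ih => exact cutsInto_lolliR ih
  | assoc _ ih => exact cutsInto_assoc ih
  | unitL _ ih => exact cutsInto_unitL ih
  | unitR _ ih => exact cutsInto_unitR ih

end CutsInto

/-- Admissibility of cut in LSkT. -/
theorem cut_admissible (T : Ctx) (U : Tr) (A C : Fma)
    (f : TDer U A) (g : TDer (plug T (Tr.fma A)) C) : TDer (plug T U) C :=
  TDer.cutsInto (fun B _ _ _ T' f' g' => cut_admissible T' _ B _ f' g') f g T rfl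
termination_by sizeOf A
end

section
/- In the axiomatic calculus SkMBiCA, the axioms λᴿ : A ⊢ I ⊗ᴿ A, ρᴿ : A ⊗ᴿ I ⊢ A, and αᴿ : A ⊗ᴿ (B ⊗ᴿ C) ⊢ (A ⊗ᴿ B) ⊗ᴿ C are all derivable. -/
/-- Formulae of skew monoidal bi-closed logic:
atoms, unit I, left/right tensors and implications. -/
inductive Fma2 : Type
  | atom : ℕ → Fma2
  | I : Fma2
  | tL : Fma2 → Fma2 → Fma2   -- A ⊗ᴸ B
  | lL : Fma2 → Fma2 → Fma2   -- A ⊸ᴸ B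
  | tR : Fma2 → Fma2 → Fma2   -- A ⊗ᴿ B
  | lR : Fma2 → Fma2 → Fma2   -- A ⊸ᴿ B

/-- Derivability in the axiomatic calculus SkMBiCA: `ADer A B` means `A ⊢ B`. -/
inductive ADer : Fma2 → Fma2 → Prop
  | id {A} : ADer A A
  | comp {A B C} : ADer A B → ADer B C → ADer A C
  | tensL {A B C D} : ADer A C → ADer B D → ADer (Fma2.tL A B) (Fma2.tL C D)
  | lolliL {A B C D} : ADer C A → ADer B D → ADer (Fma2.lL A B) (Fma2.lL C D)
  | lolliR {A B C D} : ADer C A → ADer B D → ADer (Fma2.lR A B) (Fma2.lR C D)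
  | lam {A} : ADer (Fma2.tL Fma2.I A) A
  | rho {A} : ADer A (Fma2.tL A Fma2.I)
  | alpha {A B C} : ADer (Fma2.tL (Fma2.tL A B) C) (Fma2.tL A (Fma2.tL B C))
  | gamma {A B} : ADer (Fma2.tL A B) (Fma2.tR B A)
  | gammaInv {A B} : ADer (Fma2.tR A B) (Fma2.tL B A)
  | pi {A B C} : ADer (Fma2.tL A B) C → ADer A (Fma2.lL B C)
  | piInv {A B C} : ADer A (Fma2.lL B C) → ADer (Fma2.tL A B) C
  | piR {A B C} : ADer (Fma2.tR A B) C → ADer A (Fma2.lR B C)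
  | piRInv {A B C} : ADer A (Fma2.lR B C) → ADer (Fma2.tR A B) C

/-!
The axioms `γ : A ⊗ᴸ B ⊢ B ⊗ᴿ A` and `γ⁻¹ : A ⊗ᴿ B ⊢ B ⊗ᴸ A` translate between the two tensors,
swapping the arguments, so each right law is the mirror image of a left law:
`λᴿ = ρ ; γ`, `ρᴿ = γ⁻¹ ; λ`, and `αᴿ` is `α` conjugated by `γ`.
-/

local infixl:70 " ⊗ᴸ " => Fma2.tL
local infixl:70 " ⊗ᴿ " => Fma2.tR

namespace ADer

instance : Trans ADer ADer ADer := ⟨comp⟩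

theorem lamR {A : Fma2} : ADer A (Fma2.I ⊗ᴿ A) :=
  comp rho gamma

theorem rhoR {A : Fma2} : ADer (A ⊗ᴿ Fma2.I) A :=
  comp gammaInv lam

theorem alphaR {A B C : Fma2} : ADer (A ⊗ᴿ (B ⊗ᴿ C)) ((A ⊗ᴿ B) ⊗ᴿ C) :=
  calc
    ADer (A ⊗ᴿ (B ⊗ᴿ C)) ((B ⊗ᴿ C) ⊗ᴸ A) := gammaInv
    ADer _ ((C ⊗ᴸ B) ⊗ᴸ A) := tensL gammaInv id
    ADer _ (C ⊗ᴸ (B ⊗ᴸ A)) := alpha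
    ADer _ (C ⊗ᴸ (A ⊗ᴿ B)) := tensL id gamma
    ADer _ ((A ⊗ᴿ B) ⊗ᴿ C) := gamma

end ADer

/-- The right skew structural laws λᴿ, ρᴿ, αᴿ are derivable in SkMBiCA. -/
theorem right_skew_laws_derivable :
    (∀ A : Fma2, ADer A (Fma2.tR Fma2.I A)) ∧
    (∀ A : Fma2, ADer (Fma2.tR A Fma2.I) A) ∧
    (∀ A B C : Fma2, ADer (Fma2.tR A (Fma2.tR B C)) (Fma2.tR (Fma2.tR A B) C)) :=
  ⟨fun _ => ADer.lamR, fun _ => ADer.rhoR, fun _ _ _ => ADer.alphaR⟩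
end

section
/- In the tree sequent calculus SkMBiCT for skew monoidal bi-closed logic, the cut rule is admissible: from derivations of U ⊢ A and T[A] ⊢ C one obtains a derivation of T[U] ⊢ C. -/
/-- Trees with two pairing modes: comma (for ⊗ᴸ) and semicolon (for ⊗ᴿ). -/
inductive Tr2 : Type
  | fma : Fma2 → Tr2
  | emp : Tr2
  | com : Tr2 → Tr2 → Tr2   -- (T , U)
  | sem : Tr2 → Tr2 → Tr2   -- (T ; U)

/-- Contexts: two-mode trees with a single hole. -/
inductive Ctx2 : Type
  | hole : Ctx2
  | comL : Ctx2 → Tr2 → Ctx2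
  | comR : Tr2 → Ctx2 → Ctx2
  | semL : Ctx2 → Tr2 → Ctx2
  | semR : Tr2 → Ctx2 → Ctx2

/-- Substitution of a tree into the hole of a context. -/
def plug2 : Ctx2 → Tr2 → Tr2
  | Ctx2.hole, U => U
  | Ctx2.comL C T, U => Tr2.com (plug2 C U) T
  | Ctx2.comR T C, U => Tr2.com T (plug2 C U)
  | Ctx2.semL C T, U => Tr2.sem (plug2 C U) T
  | Ctx2.semR T C, U => Tr2.sem T (plug2 C U)

/-- Derivability in the tree sequent calculus SkMBiCT: `BDer T A` means `T ⊢ A`. -/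
inductive BDer : Tr2 → Fma2 → Prop
  | ax {A} : BDer (Tr2.fma A) A
  | IR : BDer Tr2.emp Fma2.I
  | IL {T C} : BDer (plug2 T Tr2.emp) C → BDer (plug2 T (Tr2.fma Fma2.I)) C
  | tLL {T A B C} : BDer (plug2 T (Tr2.com (Tr2.fma A) (Tr2.fma B))) C →
      BDer (plug2 T (Tr2.fma (Fma2.tL A B))) C
  | tLR {T U A B} : BDer T A → BDer U B → BDer (Tr2.com T U) (Fma2.tL A B)
  | tRL {T A B C} : BDer (plug2 T (Tr2.sem (Tr2.fma A) (Tr2.fma B))) C →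
      BDer (plug2 T (Tr2.fma (Fma2.tR A B))) C
  | tRR {T U A B} : BDer T A → BDer U B → BDer (Tr2.sem T U) (Fma2.tR A B)
  | lLL {T U A B C} : BDer U A → BDer (plug2 T (Tr2.fma B)) C →
      BDer (plug2 T (Tr2.com (Tr2.fma (Fma2.lL A B)) U)) C
  | lLR {T A B} : BDer (Tr2.com T (Tr2.fma A)) B → BDer T (Fma2.lL A B)
  | lRL {T U A B C} : BDer U A → BDer (plug2 T (Tr2.fma B)) C →
      BDer (plug2 T (Tr2.sem (Tr2.fma (Fma2.lR A B)) U)) C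
  | lRR {T A B} : BDer (Tr2.sem T (Tr2.fma A)) B → BDer T (Fma2.lR A B)
  | assocL {T U₀ U₁ U₂ C} : BDer (plug2 T (Tr2.com U₀ (Tr2.com U₁ U₂))) C →
      BDer (plug2 T (Tr2.com (Tr2.com U₀ U₁) U₂)) C
  | assocR {T U₀ U₁ U₂ C} : BDer (plug2 T (Tr2.sem (Tr2.sem U₀ U₁) U₂)) C →
      BDer (plug2 T (Tr2.sem U₀ (Tr2.sem U₁ U₂))) C
  | comm {T U₀ U₁ C} : BDer (plug2 T (Tr2.com U₀ U₁)) C →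
      BDer (plug2 T (Tr2.sem U₁ U₀)) C
  | commInv {T U₀ U₁ C} : BDer (plug2 T (Tr2.sem U₁ U₀)) C →
      BDer (plug2 T (Tr2.com U₀ U₁)) C
  | unitLL {T U C} : BDer (plug2 T U) C → BDer (plug2 T (Tr2.com Tr2.emp U)) C
  | unitRL {T U C} : BDer (plug2 T (Tr2.com U Tr2.emp)) C → BDer (plug2 T U) C
  | unitLR {T U C} : BDer (plug2 T U) C → BDer (plug2 T (Tr2.sem U Tr2.emp)) C
  | unitRR {T U C} : BDer (plug2 T (Tr2.sem Tr2.emp U)) C → BDer (plug2 T U) C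

namespace SkMBiCTCut
open Fma2 Tr2 Ctx2

/-- Composition of contexts. -/
def comp2 : Ctx2 → Ctx2 → Ctx2
  | Ctx2.hole, S => S
  | Ctx2.comL C t, S => Ctx2.comL (comp2 C S) t
  | Ctx2.comR t C, S => Ctx2.comR t (comp2 C S)
  | Ctx2.semL C t, S => Ctx2.semL (comp2 C S) t
  | Ctx2.semR t C, S => Ctx2.semR t (comp2 C S)

@[simp] lemma plug_comp (T S : Ctx2) (X : Tr2) :
    plug2 (comp2 T S) X = plug2 T (plug2 S X) := by
  induction T <;> simp [comp2, plug2, *]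

@[simp] lemma comp_hole (T : Ctx2) : comp2 T Ctx2.hole = T := by
  induction T <;> simp [comp2, *]

/-- Size of a formula. -/
def sz : Fma2 → ℕ
  | .atom _ => 0
  | .I => 0
  | .tL A B => sz A + sz B + 1
  | .lL A B => sz A + sz B + 1
  | .tR A B => sz A + sz B + 1
  | .lR A B => sz A + sz B + 1

/-- Splitting lemma: if `plug2 T' X = plug2 T (fma A)`, then either the
occurrence of `fma A` is inside `X`, or the two positions are disjoint. -/
lemma split : ∀ (T' : Ctx2) (X : Tr2) (T : Ctx2) (A : Fma2),
    plug2 T' X = plug2 T (Tr2.fma A) →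
    (∃ D, T = comp2 T' D ∧ X = plug2 D (Tr2.fma A)) ∨
    (∃ G H : Tr2 → Ctx2, (∀ Y Z, plug2 (G Y) Z = plug2 (H Z) Y) ∧
      T = G X ∧ T' = H (Tr2.fma A)) := by
  intro T'
  induction T' with
  | hole =>
    intro X T A h
    exact Or.inl ⟨T, rfl, h⟩
  | comL C t ih =>
    intro X T A h
    cases T with
    | hole => simp [plug2] at h
    | comL T₀ t₂ =>
      simp only [plug2, Tr2.com.injEq] at h
      obtain ⟨h1, h2⟩ := h
      subst h2
      rcases ih X T₀ A h1 with ⟨D, hT, hX⟩ | ⟨G, H, hGH, hT, hT'⟩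
      · exact Or.inl ⟨D, by simp [hT, comp2], hX⟩
      · exact Or.inr ⟨fun Y => Ctx2.comL (G Y) t, fun Z => Ctx2.comL (H Z) t,
          fun Y Z => by simp [plug2, hGH], by simp [hT], by simp [hT']⟩
    | comR t₁ T₀ =>
      simp only [plug2, Tr2.com.injEq] at h
      obtain ⟨h1, h2⟩ := h
      exact Or.inr ⟨fun Y => Ctx2.comR (plug2 C Y) T₀, fun Z => Ctx2.comL C (plug2 T₀ Z),
        fun Y Z => by simp [plug2], by simp [plug2, ← h1, h2], by simp [plug2, ← h1, h2]⟩
    | semL T₀ t₂ => simp [plug2] at h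
    | semR t₁ T₀ => simp [plug2] at h
  | comR t C ih =>
    intro X T A h
    cases T with
    | hole => simp [plug2] at h
    | comR t₁ T₀ =>
      simp only [plug2, Tr2.com.injEq] at h
      obtain ⟨h2, h1⟩ := h
      subst h2
      rcases ih X T₀ A h1 with ⟨D, hT, hX⟩ | ⟨G, H, hGH, hT, hT'⟩
      · exact Or.inl ⟨D, by simp [hT, comp2], hX⟩
      · exact Or.inr ⟨fun Y => Ctx2.comR t (G Y), fun Z => Ctx2.comR t (H Z),
          fun Y Z => by simp [plug2, hGH], by simp [hT], by simp [hT']⟩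
    | comL T₀ t₂ =>
      simp only [plug2, Tr2.com.injEq] at h
      obtain ⟨h1, h2⟩ := h
      exact Or.inr ⟨fun Y => Ctx2.comL T₀ (plug2 C Y), fun Z => Ctx2.comR (plug2 T₀ Z) C,
        fun Y Z => by simp [plug2], by simp [plug2, h1, ← h2], by simp [plug2, h1, ← h2]⟩
    | semL T₀ t₂ => simp [plug2] at h
    | semR t₁ T₀ => simp [plug2] at h
  | semL C t ih =>
    intro X T A h
    cases T with
    | hole => simp [plug2] at h
    | semL T₀ t₂ =>
      simp only [plug2, Tr2.sem.injEq] at h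
      obtain ⟨h1, h2⟩ := h
      subst h2
      rcases ih X T₀ A h1 with ⟨D, hT, hX⟩ | ⟨G, H, hGH, hT, hT'⟩
      · exact Or.inl ⟨D, by simp [hT, comp2], hX⟩
      · exact Or.inr ⟨fun Y => Ctx2.semL (G Y) t, fun Z => Ctx2.semL (H Z) t,
          fun Y Z => by simp [plug2, hGH], by simp [hT], by simp [hT']⟩
    | semR t₁ T₀ =>
      simp only [plug2, Tr2.sem.injEq] at h
      obtain ⟨h1, h2⟩ := h
      exact Or.inr ⟨fun Y => Ctx2.semR (plug2 C Y) T₀, fun Z => Ctx2.semL C (plug2 T₀ Z),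
        fun Y Z => by simp [plug2], by simp [plug2, ← h1, h2], by simp [plug2, ← h1, h2]⟩
    | comL T₀ t₂ => simp [plug2] at h
    | comR t₁ T₀ => simp [plug2] at h
  | semR t C ih =>
    intro X T A h
    cases T with
    | hole => simp [plug2] at h
    | semR t₁ T₀ =>
      simp only [plug2, Tr2.sem.injEq] at h
      obtain ⟨h2, h1⟩ := h
      subst h2
      rcases ih X T₀ A h1 with ⟨D, hT, hX⟩ | ⟨G, H, hGH, hT, hT'⟩
      · exact Or.inl ⟨D, by simp [hT, comp2], hX⟩
      · exact Or.inr ⟨fun Y => Ctx2.semR t (G Y), fun Z => Ctx2.semR t (H Z),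
          fun Y Z => by simp [plug2, hGH], by simp [hT], by simp [hT']⟩
    | semL T₀ t₂ =>
      simp only [plug2, Tr2.sem.injEq] at h
      obtain ⟨h1, h2⟩ := h
      exact Or.inr ⟨fun Y => Ctx2.semL T₀ (plug2 C Y), fun Z => Ctx2.semR (plug2 T₀ Z) C,
        fun Y Z => by simp [plug2], by simp [plug2, h1, ← h2], by simp [plug2, h1, ← h2]⟩
    | comL T₀ t₂ => simp [plug2] at h
    | comR t₁ T₀ => simp [plug2] at h


/-- The cut property for a fixed cut formula. -/
def CutP (A : Fma2) : Prop :=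
  ∀ U T C, BDer U A → BDer (plug2 T (Tr2.fma A)) C → BDer (plug2 T U) C

/-- Data available after the principal left rule on `A` has been applied in the
right premise of a cut. -/
def Rely : Fma2 → Ctx2 → Fma2 → Prop
  | .atom n, T, C => BDer (plug2 T (Tr2.fma (Fma2.atom n))) C
  | .I, T, C => BDer (plug2 T Tr2.emp) C
  | .tL A B, T, C => BDer (plug2 T (Tr2.com (Tr2.fma A) (Tr2.fma B))) C
  | .tR A B, T, C => BDer (plug2 T (Tr2.sem (Tr2.fma A) (Tr2.fma B))) C
  | .lL A B, T, C => ∃ T₁ U₁, T = comp2 T₁ (Ctx2.comL Ctx2.hole U₁) ∧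
      BDer U₁ A ∧ BDer (plug2 T₁ (Tr2.fma B)) C
  | .lR A B, T, C => ∃ T₁ U₁, T = comp2 T₁ (Ctx2.semL Ctx2.hole U₁) ∧
      BDer U₁ A ∧ BDer (plug2 T₁ (Tr2.fma B)) C

lemma sub : ∀ {U A} (_ : BDer U A),
    (∀ B, sz B < sz A → CutP B) → ∀ T C, Rely A T C → BDer (plug2 T U) C := by
  intro U A f
  induction f with
  | @ax A =>
    intro ihA T C e
    cases A with
    | atom n => exact e
    | I => exact BDer.IL e
    | tL A B => exact BDer.tLL e
    | tR A B => exact BDer.tRL e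
    | lL A B =>
      obtain ⟨T₁, U₁, rfl, g₁, g₂⟩ := e
      simpa [plug2] using BDer.lLL g₁ g₂
    | lR A B =>
      obtain ⟨T₁, U₁, rfl, g₁, g₂⟩ := e
      simpa [plug2] using BDer.lRL g₁ g₂
  | IR => intro ihA T C e; exact e
  | @IL S C' _ ih =>
    intro ihA T C e
    have h : BDer (plug2 (comp2 T S) Tr2.emp) C := by simpa using ih ihA T C e
    simpa using BDer.IL h
  | @tLL S A₁ B₁ C' _ ih =>
    intro ihA T C e
    have h : BDer (plug2 (comp2 T S) (Tr2.com (Tr2.fma A₁) (Tr2.fma B₁))) C := by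
      simpa using ih ihA T C e
    simpa using BDer.tLL h
  | @tLR T₁ U₁ A₁ B₁ f₁ f₂ _ _ =>
    intro ihA T C e
    have e₁ : BDer (plug2 (comp2 T (Ctx2.comL Ctx2.hole (Tr2.fma B₁))) (Tr2.fma A₁)) C := by
      simpa [plug2, Rely] using e
    have h₁ : BDer (plug2 T (Tr2.com T₁ (Tr2.fma B₁))) C := by
      simpa [plug2] using ihA A₁ (by simp [sz]) T₁ _ C f₁ e₁
    have e₂ : BDer (plug2 (comp2 T (Ctx2.comR T₁ Ctx2.hole)) (Tr2.fma B₁)) C := by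
      simpa [plug2] using h₁
    simpa [plug2] using ihA B₁ (by simp [sz]) U₁ _ C f₂ e₂
  | @tRL S A₁ B₁ C' _ ih =>
    intro ihA T C e
    have h : BDer (plug2 (comp2 T S) (Tr2.sem (Tr2.fma A₁) (Tr2.fma B₁))) C := by
      simpa using ih ihA T C e
    simpa using BDer.tRL h
  | @tRR T₁ U₁ A₁ B₁ f₁ f₂ _ _ =>
    intro ihA T C e
    have e₁ : BDer (plug2 (comp2 T (Ctx2.semL Ctx2.hole (Tr2.fma B₁))) (Tr2.fma A₁)) C := by
      simpa [plug2, Rely] using e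
    have h₁ : BDer (plug2 T (Tr2.sem T₁ (Tr2.fma B₁))) C := by
      simpa [plug2] using ihA A₁ (by simp [sz]) T₁ _ C f₁ e₁
    have e₂ : BDer (plug2 (comp2 T (Ctx2.semR T₁ Ctx2.hole)) (Tr2.fma B₁)) C := by
      simpa [plug2] using h₁
    simpa [plug2] using ihA B₁ (by simp [sz]) U₁ _ C f₂ e₂
  | @lLL S U₁ A₁ B₁ C' g₁ _ _ ih₂ =>
    intro ihA T C e
    have h : BDer (plug2 (comp2 T S) (Tr2.fma B₁)) C := by simpa using ih₂ ihA T C e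
    simpa using BDer.lLL g₁ h
  | @lLR T₁ A₁ B₁ f₀ _ =>
    intro ihA T C e
    obtain ⟨T₂, U₂, rfl, g₁, g₂⟩ := e
    have h₁ : BDer (plug2 T₂ (Tr2.com T₁ (Tr2.fma A₁))) C :=
      ihA B₁ (by simp [sz]) _ T₂ C f₀ g₂
    have e₂ : BDer (plug2 (comp2 T₂ (Ctx2.comR T₁ Ctx2.hole)) (Tr2.fma A₁)) C := by
      simpa [plug2] using h₁
    have h₂ := ihA A₁ (by simp [sz]) U₂ _ C g₁ e₂
    simpa [plug2] using h₂
  | @lRL S U₁ A₁ B₁ C' g₁ _ _ ih₂ =>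
    intro ihA T C e
    have h : BDer (plug2 (comp2 T S) (Tr2.fma B₁)) C := by simpa using ih₂ ihA T C e
    simpa using BDer.lRL g₁ h
  | @lRR T₁ A₁ B₁ f₀ _ =>
    intro ihA T C e
    obtain ⟨T₂, U₂, rfl, g₁, g₂⟩ := e
    have h₁ : BDer (plug2 T₂ (Tr2.sem T₁ (Tr2.fma A₁))) C :=
      ihA B₁ (by simp [sz]) _ T₂ C f₀ g₂
    have e₂ : BDer (plug2 (comp2 T₂ (Ctx2.semR T₁ Ctx2.hole)) (Tr2.fma A₁)) C := by
      simpa [plug2] using h₁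
    have h₂ := ihA A₁ (by simp [sz]) U₂ _ C g₁ e₂
    simpa [plug2] using h₂
  | @assocL S U₀ U₁ U₂ C' _ ih =>
    intro ihA T C e
    have h : BDer (plug2 (comp2 T S) (Tr2.com U₀ (Tr2.com U₁ U₂))) C := by
      simpa using ih ihA T C e
    simpa using BDer.assocL h
  | @assocR S U₀ U₁ U₂ C' _ ih =>
    intro ihA T C e
    have h : BDer (plug2 (comp2 T S) (Tr2.sem (Tr2.sem U₀ U₁) U₂)) C := by
      simpa using ih ihA T C e
    simpa using BDer.assocR h
  | @comm S U₀ U₁ C' _ ih =>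
    intro ihA T C e
    have h : BDer (plug2 (comp2 T S) (Tr2.com U₀ U₁)) C := by
      simpa using ih ihA T C e
    simpa using BDer.comm h
  | @commInv S U₀ U₁ C' _ ih =>
    intro ihA T C e
    have h : BDer (plug2 (comp2 T S) (Tr2.sem U₁ U₀)) C := by
      simpa using ih ihA T C e
    simpa using BDer.commInv h
  | @unitLL S U' C' _ ih =>
    intro ihA T C e
    have h : BDer (plug2 (comp2 T S) U') C := by simpa using ih ihA T C e
    simpa using BDer.unitLL h
  | @unitRL S U' C' _ ih =>
    intro ihA T C e
    have h : BDer (plug2 (comp2 T S) (Tr2.com U' Tr2.emp)) C := by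
      simpa using ih ihA T C e
    simpa using BDer.unitRL h
  | @unitLR S U' C' _ ih =>
    intro ihA T C e
    have h : BDer (plug2 (comp2 T S) U') C := by simpa using ih ihA T C e
    simpa using BDer.unitLR h
  | @unitRR S U' C' _ ih =>
    intro ihA T C e
    have h : BDer (plug2 (comp2 T S) (Tr2.sem Tr2.emp U')) C := by
      simpa using ih ihA T C e
    simpa using BDer.unitRR h


/-- Disjoint-positions commutation helper. -/
lemma djt {A C : Fma2} {X X' U : Tr2} (G H : Tr2 → Ctx2)
    (hGH : ∀ Y Z, plug2 (G Y) Z = plug2 (H Z) Y)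
    (ihh : ∀ T₂, plug2 (H (Tr2.fma A)) X' = plug2 T₂ (Tr2.fma A) → BDer (plug2 T₂ U) C)
    (rule : BDer (plug2 (H U) X') C → BDer (plug2 (H U) X) C) :
    BDer (plug2 (G X) U) C := by
  have h1 := ihh (G X') (hGH X' (Tr2.fma A)).symm
  rw [hGH X' U] at h1
  rw [hGH X U]
  exact rule h1

lemma main {A : Fma2} (ihA : ∀ B, sz B < sz A → CutP B) :
    ∀ {S C}, BDer S C → ∀ T, S = plug2 T (Tr2.fma A) → ∀ U, BDer U A → BDer (plug2 T U) C := by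
  intro S C g
  induction g with
  | @ax A' =>
    intro T hT U f
    cases T <;> simp [plug2] at hT
    subst hT; exact f
  | IR =>
    intro T hT U f
    cases T <;> simp [plug2] at hT
  | @IL T' C' h ih =>
    intro T hT U f
    rcases split T' (Tr2.fma Fma2.I) T A hT with ⟨D, rfl, hX⟩ | ⟨G, H, hGH, rfl, rfl⟩
    · cases D <;> simp [plug2] at hX
      subst hX
      simpa using sub f ihA T' C' h
    · exact djt G H hGH (fun T₂ e => ih T₂ e U f) (fun k => BDer.IL k)
  | @tLL T' A₁ B₁ C' h ih =>
    intro T hT U f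
    rcases split T' (Tr2.fma (Fma2.tL A₁ B₁)) T A hT with ⟨D, rfl, hX⟩ | ⟨G, H, hGH, rfl, rfl⟩
    · cases D <;> simp [plug2] at hX
      subst hX
      simpa using sub f ihA T' C' h
    · exact djt G H hGH (fun T₂ e => ih T₂ e U f) (fun k => BDer.tLL k)
  | @tLR T₁ U₁ A₁ B₁ f₁ f₂ ih₁ ih₂ =>
    intro T hT U f
    cases T with
    | hole => simp [plug2] at hT
    | comL T₀ t =>
      simp only [plug2, Tr2.com.injEq] at hT
      obtain ⟨h1, rfl⟩ := hT
      exact BDer.tLR (ih₁ T₀ h1 U f) f₂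
    | comR t T₀ =>
      simp only [plug2, Tr2.com.injEq] at hT
      obtain ⟨rfl, h1⟩ := hT
      exact BDer.tLR f₁ (ih₂ T₀ h1 U f)
    | semL T₀ t => simp [plug2] at hT
    | semR t T₀ => simp [plug2] at hT
  | @tRL T' A₁ B₁ C' h ih =>
    intro T hT U f
    rcases split T' (Tr2.fma (Fma2.tR A₁ B₁)) T A hT with ⟨D, rfl, hX⟩ | ⟨G, H, hGH, rfl, rfl⟩
    · cases D <;> simp [plug2] at hX
      subst hX
      simpa using sub f ihA T' C' h
    · exact djt G H hGH (fun T₂ e => ih T₂ e U f) (fun k => BDer.tRL k)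
  | @tRR T₁ U₁ A₁ B₁ f₁ f₂ ih₁ ih₂ =>
    intro T hT U f
    cases T with
    | hole => simp [plug2] at hT
    | semL T₀ t =>
      simp only [plug2, Tr2.sem.injEq] at hT
      obtain ⟨h1, rfl⟩ := hT
      exact BDer.tRR (ih₁ T₀ h1 U f) f₂
    | semR t T₀ =>
      simp only [plug2, Tr2.sem.injEq] at hT
      obtain ⟨rfl, h1⟩ := hT
      exact BDer.tRR f₁ (ih₂ T₀ h1 U f)
    | comL T₀ t => simp [plug2] at hT
    | comR t T₀ => simp [plug2] at hT
  | @lLL T' U₁ A₁ B₁ C' g₁ g₂ ih₁ ih₂ =>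
    intro T hT U f
    rcases split T' (Tr2.com (Tr2.fma (Fma2.lL A₁ B₁)) U₁) T A hT with
      ⟨D, rfl, hX⟩ | ⟨G, H, hGH, rfl, rfl⟩
    · cases D with
      | hole => simp [plug2] at hX
      | comL D' t =>
        simp only [plug2, Tr2.com.injEq] at hX
        obtain ⟨hX1, rfl⟩ := hX
        cases D' <;> simp [plug2] at hX1
        subst hX1
        exact sub f ihA _ C' ⟨T', U₁, rfl, g₁, g₂⟩
      | comR t D'' =>
        simp only [plug2, Tr2.com.injEq] at hX
        obtain ⟨rfl, hU⟩ := hX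
        have k := ih₁ D'' hU U f
        simpa [plug2] using BDer.lLL (T := T') k g₂
      | semL D' t => simp [plug2] at hX
      | semR t D' => simp [plug2] at hX
    · exact djt G H hGH (fun T₂ e => ih₂ T₂ e U f) (fun k => BDer.lLL g₁ k)
  | @lLR T₁ A₁ B₁ f₀ ih₀ =>
    intro T hT U f
    have k := ih₀ (Ctx2.comL T (Tr2.fma A₁)) (by simp [plug2, hT]) U f
    exact BDer.lLR (by simpa [plug2] using k)
  | @lRL T' U₁ A₁ B₁ C' g₁ g₂ ih₁ ih₂ =>
    intro T hT U f
    rcases split T' (Tr2.sem (Tr2.fma (Fma2.lR A₁ B₁)) U₁) T A hT with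
      ⟨D, rfl, hX⟩ | ⟨G, H, hGH, rfl, rfl⟩
    · cases D with
      | hole => simp [plug2] at hX
      | semL D' t =>
        simp only [plug2, Tr2.sem.injEq] at hX
        obtain ⟨hX1, rfl⟩ := hX
        cases D' <;> simp [plug2] at hX1
        subst hX1
        exact sub f ihA _ C' ⟨T', U₁, rfl, g₁, g₂⟩
      | semR t D'' =>
        simp only [plug2, Tr2.sem.injEq] at hX
        obtain ⟨rfl, hU⟩ := hX
        have k := ih₁ D'' hU U f
        simpa [plug2] using BDer.lRL (T := T') k g₂
      | comL D' t => simp [plug2] at hX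
      | comR t D' => simp [plug2] at hX
    · exact djt G H hGH (fun T₂ e => ih₂ T₂ e U f) (fun k => BDer.lRL g₁ k)
  | @lRR T₁ A₁ B₁ f₀ ih₀ =>
    intro T hT U f
    have k := ih₀ (Ctx2.semL T (Tr2.fma A₁)) (by simp [plug2, hT]) U f
    exact BDer.lRR (by simpa [plug2] using k)
  | @assocL T' U₀ U₁ U₂ C' h ih =>
    intro T hT U f
    rcases split T' (Tr2.com (Tr2.com U₀ U₁) U₂) T A hT with
      ⟨D, rfl, hX⟩ | ⟨G, H, hGH, rfl, rfl⟩
    · cases D with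
      | hole => simp [plug2] at hX
      | comL D' t =>
        simp only [plug2, Tr2.com.injEq] at hX
        obtain ⟨hX1, rfl⟩ := hX
        cases D' with
        | hole => simp [plug2] at hX1
        | comL D₀ t₁ =>
          simp only [plug2, Tr2.com.injEq] at hX1
          obtain ⟨hU₀, rfl⟩ := hX1
          have k := ih (comp2 T' (Ctx2.comL D₀ (Tr2.com U₁ U₂))) (by simp [plug2, hU₀]) U f
          have k' : BDer (plug2 T' (Tr2.com (plug2 D₀ U) (Tr2.com U₁ U₂))) C' := by
            simpa [plug2] using k
          simpa [plug2] using BDer.assocL (T := T') k'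
        | comR t₀ D₁ =>
          simp only [plug2, Tr2.com.injEq] at hX1
          obtain ⟨rfl, hU₁⟩ := hX1
          have k := ih (comp2 T' (Ctx2.comR U₀ (Ctx2.comL D₁ U₂))) (by simp [plug2, hU₁]) U f
          have k' : BDer (plug2 T' (Tr2.com U₀ (Tr2.com (plug2 D₁ U) U₂))) C' := by
            simpa [plug2] using k
          simpa [plug2] using BDer.assocL (T := T') k'
        | semL D₀ t₁ => simp [plug2] at hX1
        | semR t₀ D₁ => simp [plug2] at hX1
      | comR t D₂ =>
        simp only [plug2, Tr2.com.injEq] at hX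
        obtain ⟨rfl, hU₂⟩ := hX
        have k := ih (comp2 T' (Ctx2.comR U₀ (Ctx2.comR U₁ D₂))) (by simp [plug2, hU₂]) U f
        have k' : BDer (plug2 T' (Tr2.com U₀ (Tr2.com U₁ (plug2 D₂ U)))) C' := by
          simpa [plug2] using k
        simpa [plug2] using BDer.assocL (T := T') k'
      | semL D' t => simp [plug2] at hX
      | semR t D' => simp [plug2] at hX
    · exact djt G H hGH (fun T₂ e => ih T₂ e U f) (fun k => BDer.assocL k)
  | @assocR T' U₀ U₁ U₂ C' h ih =>
    intro T hT U f
    rcases split T' (Tr2.sem U₀ (Tr2.sem U₁ U₂)) T A hT with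
      ⟨D, rfl, hX⟩ | ⟨G, H, hGH, rfl, rfl⟩
    · cases D with
      | hole => simp [plug2] at hX
      | semL D₀ t =>
        simp only [plug2, Tr2.sem.injEq] at hX
        obtain ⟨hU₀, rfl⟩ := hX
        have k := ih (comp2 T' (Ctx2.semL (Ctx2.semL D₀ U₁) U₂)) (by simp [plug2, hU₀]) U f
        have k' : BDer (plug2 T' (Tr2.sem (Tr2.sem (plug2 D₀ U) U₁) U₂)) C' := by
          simpa [plug2] using k
        simpa [plug2] using BDer.assocR (T := T') k'
      | semR t D' =>
        simp only [plug2, Tr2.sem.injEq] at hX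
        obtain ⟨rfl, hX1⟩ := hX
        cases D' with
        | hole => simp [plug2] at hX1
        | semL D₁ t₂ =>
          simp only [plug2, Tr2.sem.injEq] at hX1
          obtain ⟨hU₁, rfl⟩ := hX1
          have k := ih (comp2 T' (Ctx2.semL (Ctx2.semR U₀ D₁) U₂)) (by simp [plug2, hU₁]) U f
          have k' : BDer (plug2 T' (Tr2.sem (Tr2.sem U₀ (plug2 D₁ U)) U₂)) C' := by
            simpa [plug2] using k
          simpa [plug2] using BDer.assocR (T := T') k'
        | semR t₁ D₂ =>
          simp only [plug2, Tr2.sem.injEq] at hX1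
          obtain ⟨rfl, hU₂⟩ := hX1
          have k := ih (comp2 T' (Ctx2.semR (Tr2.sem U₀ U₁) D₂)) (by simp [plug2, hU₂]) U f
          have k' : BDer (plug2 T' (Tr2.sem (Tr2.sem U₀ U₁) (plug2 D₂ U))) C' := by
            simpa [plug2] using k
          simpa [plug2] using BDer.assocR (T := T') k'
        | comL D₁ t₂ => simp [plug2] at hX1
        | comR t₁ D₂ => simp [plug2] at hX1
      | comL D' t => simp [plug2] at hX
      | comR t D' => simp [plug2] at hX
    · exact djt G H hGH (fun T₂ e => ih T₂ e U f) (fun k => BDer.assocR k)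
  | @comm T' U₀ U₁ C' h ih =>
    intro T hT U f
    rcases split T' (Tr2.sem U₁ U₀) T A hT with ⟨D, rfl, hX⟩ | ⟨G, H, hGH, rfl, rfl⟩
    · cases D with
      | hole => simp [plug2] at hX
      | semL D₁ t =>
        simp only [plug2, Tr2.sem.injEq] at hX
        obtain ⟨hU₁, rfl⟩ := hX
        have k := ih (comp2 T' (Ctx2.comR U₀ D₁)) (by simp [plug2, hU₁]) U f
        have k' : BDer (plug2 T' (Tr2.com U₀ (plug2 D₁ U))) C' := by simpa [plug2] using k
        simpa [plug2] using BDer.comm (T := T') k'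
      | semR t D₀ =>
        simp only [plug2, Tr2.sem.injEq] at hX
        obtain ⟨rfl, hU₀⟩ := hX
        have k := ih (comp2 T' (Ctx2.comL D₀ U₁)) (by simp [plug2, hU₀]) U f
        have k' : BDer (plug2 T' (Tr2.com (plug2 D₀ U) U₁)) C' := by simpa [plug2] using k
        simpa [plug2] using BDer.comm (T := T') k'
      | comL D' t => simp [plug2] at hX
      | comR t D' => simp [plug2] at hX
    · exact djt G H hGH (fun T₂ e => ih T₂ e U f) (fun k => BDer.comm k)
  | @commInv T' U₀ U₁ C' h ih =>
    intro T hT U f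
    rcases split T' (Tr2.com U₀ U₁) T A hT with ⟨D, rfl, hX⟩ | ⟨G, H, hGH, rfl, rfl⟩
    · cases D with
      | hole => simp [plug2] at hX
      | comL D₀ t =>
        simp only [plug2, Tr2.com.injEq] at hX
        obtain ⟨hU₀, rfl⟩ := hX
        have k := ih (comp2 T' (Ctx2.semR U₁ D₀)) (by simp [plug2, hU₀]) U f
        have k' : BDer (plug2 T' (Tr2.sem U₁ (plug2 D₀ U))) C' := by simpa [plug2] using k
        simpa [plug2] using BDer.commInv (T := T') k'
      | comR t D₁ =>
        simp only [plug2, Tr2.com.injEq] at hX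
        obtain ⟨rfl, hU₁⟩ := hX
        have k := ih (comp2 T' (Ctx2.semL D₁ U₀)) (by simp [plug2, hU₁]) U f
        have k' : BDer (plug2 T' (Tr2.sem (plug2 D₁ U) U₀)) C' := by simpa [plug2] using k
        simpa [plug2] using BDer.commInv (T := T') k'
      | semL D' t => simp [plug2] at hX
      | semR t D' => simp [plug2] at hX
    · exact djt G H hGH (fun T₂ e => ih T₂ e U f) (fun k => BDer.commInv k)
  | @unitLL T' U' C' h ih =>
    intro T hT U f
    rcases split T' (Tr2.com Tr2.emp U') T A hT with ⟨D, rfl, hX⟩ | ⟨G, H, hGH, rfl, rfl⟩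
    · cases D with
      | hole => simp [plug2] at hX
      | comL D' t =>
        simp only [plug2, Tr2.com.injEq] at hX
        obtain ⟨hX1, rfl⟩ := hX
        cases D' <;> simp [plug2] at hX1
      | comR t D'' =>
        simp only [plug2, Tr2.com.injEq] at hX
        obtain ⟨rfl, hU'⟩ := hX
        have k := ih (comp2 T' D'') (by simp [plug2, hU']) U f
        have k' : BDer (plug2 T' (plug2 D'' U)) C' := by simpa [plug2] using k
        simpa [plug2] using BDer.unitLL (T := T') k'
      | semL D' t => simp [plug2] at hX
      | semR t D' => simp [plug2] at hX
    · exact djt G H hGH (fun T₂ e => ih T₂ e U f) (fun k => BDer.unitLL k)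
  | @unitRL T' U' C' h ih =>
    intro T hT U f
    rcases split T' U' T A hT with ⟨D, rfl, hX⟩ | ⟨G, H, hGH, rfl, rfl⟩
    · have k := ih (comp2 T' (Ctx2.comL D Tr2.emp)) (by simp [plug2, hX]) U f
      have k' : BDer (plug2 T' (Tr2.com (plug2 D U) Tr2.emp)) C' := by simpa [plug2] using k
      simpa [plug2] using BDer.unitRL (T := T') k'
    · exact djt G H hGH (fun T₂ e => ih T₂ e U f) (fun k => BDer.unitRL k)
  | @unitLR T' U' C' h ih =>
    intro T hT U f
    rcases split T' (Tr2.sem U' Tr2.emp) T A hT with ⟨D, rfl, hX⟩ | ⟨G, H, hGH, rfl, rfl⟩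
    · cases D with
      | hole => simp [plug2] at hX
      | semL D' t =>
        simp only [plug2, Tr2.sem.injEq] at hX
        obtain ⟨hU', rfl⟩ := hX
        have k := ih (comp2 T' D') (by simp [plug2, hU']) U f
        have k' : BDer (plug2 T' (plug2 D' U)) C' := by simpa [plug2] using k
        simpa [plug2] using BDer.unitLR (T := T') k'
      | semR t D'' =>
        simp only [plug2, Tr2.sem.injEq] at hX
        obtain ⟨rfl, hX1⟩ := hX
        cases D'' <;> simp [plug2] at hX1
      | comL D' t => simp [plug2] at hX
      | comR t D' => simp [plug2] at hX
    · exact djt G H hGH (fun T₂ e => ih T₂ e U f) (fun k => BDer.unitLR k)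
  | @unitRR T' U' C' h ih =>
    intro T hT U f
    rcases split T' U' T A hT with ⟨D, rfl, hX⟩ | ⟨G, H, hGH, rfl, rfl⟩
    · have k := ih (comp2 T' (Ctx2.semR Tr2.emp D)) (by simp [plug2, hX]) U f
      have k' : BDer (plug2 T' (Tr2.sem Tr2.emp (plug2 D U))) C' := by simpa [plug2] using k
      simpa [plug2] using BDer.unitRR (T := T') k'
    · exact djt G H hGH (fun T₂ e => ih T₂ e U f) (fun k => BDer.unitRR k)

lemma cutP (A : Fma2) : CutP A := by
  suffices H : ∀ n A, sz A < n → CutP A from H (sz A + 1) A (Nat.lt_succ_self _)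
  intro n
  induction n with
  | zero => intro A h; exact absurd h (Nat.not_lt_zero _)
  | succ n ih =>
    intro A hA U T C f g
    exact main (A := A) (fun B hB => ih B (by omega)) g T rfl U f

end SkMBiCTCut

/-- Admissibility of cut in SkMBiCT. -/
theorem cut_admissible_SkMBiCT (T : Ctx2) (U : Tr2) (A C : Fma2)
    (f : BDer U A) (g : BDer (plug2 T (Tr2.fma A)) C) : BDer (plug2 T U) C :=
  SkMBiCTCut.cutP A U T C f g
end

section
/- Soundness of SkMBiCA with respect to relational models: if A ⊢ B is provable in SkMBiCA, then v(A) ⊆ v(B) in every SkMBiCA model ⟨W, ≤, I, L, R, v⟩. -/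
section Frames

variable {W : Type}

/-- `IsSkFrame le I L R` : ⟨W, ≤, I, L, R⟩ is a SkMBiCA frame. -/
structure IsSkFrame (le : W → W → Prop) (I : Set W)
    (L R : W → W → W → Prop) : Prop where
  refl : ∀ a, le a a
  trans : ∀ {a b c}, le a b → le b c → le a c
  I_down : ∀ {a b}, le a b → b ∈ I → a ∈ I
  L_up₁ : ∀ {a a' b c}, le a a' → L a b c → L a' b c
  L_up₂ : ∀ {a b b' c}, le b b' → L a b c → L a b' c
  L_down₃ : ∀ {a b c c'}, le c' c → L a b c → L a b c'
  R_up₁ : ∀ {a a' b c}, le a a' → R a b c → R a' b c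
  R_up₂ : ∀ {a b b' c}, le b b' → R a b c → R a b' c
  R_down₃ : ∀ {a b c c'}, le c' c → R a b c → R a b c'
  LR_reverse : ∀ a b c, L a b c ↔ R b a c
  LSA : ∀ {a b c d x}, L a b x → L x c d → ∃ y, L b c y ∧ L a y d
  LSLU : ∀ {a b e}, e ∈ I → L e a b → le b a
  LSRU : ∀ a, ∃ e ∈ I, L a e a

/-- `IsValuation le I L R v` : `v` is a valuation on the frame ⟨W, ≤, I, L, R⟩. -/
structure IsValuation (le : W → W → Prop) (I : Set W)
    (L R : W → W → W → Prop) (v : Fma2 → Set W) : Prop where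
  down : ∀ (A : Fma2) {a b}, le a b → b ∈ v A → a ∈ v A
  unit : v Fma2.I = I
  tensL : ∀ A B, v (Fma2.tL A B) = {c | ∃ a ∈ v A, ∃ b ∈ v B, L a b c}
  lolliL : ∀ A B, v (Fma2.lL A B) = {c | ∀ a ∈ v A, ∀ b, L c a b → b ∈ v B}
  tensR : ∀ A B, v (Fma2.tR A B) = {c | ∃ a ∈ v A, ∃ b ∈ v B, R a b c}
  lolliR : ∀ A B, v (Fma2.lR A B) = {c | ∀ a ∈ v A, ∀ b, R c a b → b ∈ v B}

end Frames

/-!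
Induction on derivations. Every valuation turns `⊗ᴸ`/`⊸ᴸ` and `⊗ᴿ`/`⊸ᴿ` into residuated
pairs of monotone operations on sets, which validates functoriality and the rules `π`, `πᴿ`;
each remaining axiom is the image of one frame condition: `λ` of left unitality (with
downward closure of `v A`), `ρ` of right unitality, `α` of skew associativity, and `γ`, `γ⁻¹`
of LR-reverse.
-/

namespace IsValuation

variable {W : Type} {le : W → W → Prop} {I : Set W} {L R : W → W → W → Prop}
  {v : Fma2 → Set W} {A B C D : Fma2}

theorem tensL_subset_tensL (hV : IsValuation le I L R v) (hAC : v A ⊆ v C)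
    (hBD : v B ⊆ v D) : v (A.tL B) ⊆ v (C.tL D) := by
  rw [hV.tensL, hV.tensL]
  rintro x ⟨a, ha, b, hb, hab⟩
  exact ⟨a, hAC ha, b, hBD hb, hab⟩

theorem lolliL_subset_lolliL (hV : IsValuation le I L R v) (hCA : v C ⊆ v A)
    (hBD : v B ⊆ v D) : v (A.lL B) ⊆ v (C.lL D) := by
  rw [hV.lolliL, hV.lolliL]
  exact fun x hx a ha b hxab => hBD (hx a (hCA ha) b hxab)

theorem lolliR_subset_lolliR (hV : IsValuation le I L R v) (hCA : v C ⊆ v A)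
    (hBD : v B ⊆ v D) : v (A.lR B) ⊆ v (C.lR D) := by
  rw [hV.lolliR, hV.lolliR]
  exact fun x hx a ha b hxab => hBD (hx a (hCA ha) b hxab)

theorem subset_lolliL_iff (hV : IsValuation le I L R v) :
    v A ⊆ v (B.lL C) ↔ v (A.tL B) ⊆ v C := by
  rw [hV.lolliL, hV.tensL]
  constructor
  · rintro h x ⟨a, ha, b, hb, habx⟩
    exact h ha b hb x habx
  · exact fun h x hx a ha b hxab => h ⟨x, hx, a, ha, hxab⟩

theorem subset_lolliR_iff (hV : IsValuation le I L R v) :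
    v A ⊆ v (B.lR C) ↔ v (A.tR B) ⊆ v C := by
  rw [hV.lolliR, hV.tensR]
  constructor
  · rintro h x ⟨a, ha, b, hb, habx⟩
    exact h ha b hb x habx
  · exact fun h x hx a ha b hxab => h ⟨x, hx, a, ha, hxab⟩

theorem unit_tensL_subset (hF : IsSkFrame le I L R) (hV : IsValuation le I L R v) :
    v (Fma2.I.tL A) ⊆ v A := by
  rw [hV.tensL, hV.unit]
  rintro x ⟨e, he, a, ha, heax⟩
  exact hV.down A (hF.LSLU he heax) ha

theorem subset_tensL_unit (hF : IsSkFrame le I L R) (hV : IsValuation le I L R v) :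
    v A ⊆ v (A.tL Fma2.I) := by
  rw [hV.tensL, hV.unit]
  intro x hx
  obtain ⟨e, he, hxex⟩ := hF.LSRU x
  exact ⟨x, hx, e, he, hxex⟩

theorem tensL_assoc_subset (hF : IsSkFrame le I L R) (hV : IsValuation le I L R v) :
    v ((A.tL B).tL C) ⊆ v (A.tL (B.tL C)) := by
  simp only [hV.tensL]
  rintro x ⟨ab, ⟨a, ha, b, hb, hab⟩, c, hc, habcx⟩
  obtain ⟨y, hbcy, hayx⟩ := hF.LSA hab habcx
  exact ⟨a, ha, y, ⟨b, hb, c, hc, hbcy⟩, hayx⟩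

theorem tensL_subset_tensR_swap (hF : IsSkFrame le I L R) (hV : IsValuation le I L R v) :
    v (A.tL B) ⊆ v (B.tR A) := by
  rw [hV.tensL, hV.tensR]
  rintro x ⟨a, ha, b, hb, habx⟩
  exact ⟨b, hb, a, ha, (hF.LR_reverse a b x).1 habx⟩

theorem tensR_subset_tensL_swap (hF : IsSkFrame le I L R) (hV : IsValuation le I L R v) :
    v (A.tR B) ⊆ v (B.tL A) := by
  rw [hV.tensR, hV.tensL]
  rintro x ⟨a, ha, b, hb, habx⟩
  exact ⟨b, hb, a, ha, (hF.LR_reverse b a x).2 habx⟩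

end IsValuation

/-- Soundness of SkMBiCA w.r.t. relational models. -/
theorem soundness (A B : Fma2) (h : ADer A B) :
    ∀ (W : Type) (le : W → W → Prop) (I : Set W) (L R : W → W → W → Prop)
      (v : Fma2 → Set W), IsSkFrame le I L R → IsValuation le I L R v →
      v A ⊆ v B := by
  intro W le I L R v hF hV
  induction h with
  | id => exact subset_rfl
  | comp _ _ ih₁ ih₂ => exact ih₁.trans ih₂
  | tensL _ _ ih₁ ih₂ => exact hV.tensL_subset_tensL ih₁ ih₂
  | lolliL _ _ ih₁ ih₂ => exact hV.lolliL_subset_lolliL ih₁ ih₂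
  | lolliR _ _ ih₁ ih₂ => exact hV.lolliR_subset_lolliR ih₁ ih₂
  | lam => exact hV.unit_tensL_subset hF
  | rho => exact hV.subset_tensL_unit hF
  | alpha => exact hV.tensL_assoc_subset hF
  | gamma => exact hV.tensL_subset_tensR_swap hF
  | gammaInv => exact hV.tensR_subset_tensL_swap hF
  | pi _ ih => exact hV.subset_lolliL_iff.2 ih
  | piInv _ ih => exact hV.subset_lolliL_iff.1 ih
  | piR _ ih => exact hV.subset_lolliR_iff.2 ih
  | piRInv _ ih => exact hV.subset_lolliR_iff.1 ih
end

section
/- Completeness of SkMBiCA with respect to relational models: if v(A) ⊆ v(B) in every SkMBiCA model, then A ⊢ B is provable in SkMBiCA. In particular, the canonical model, whose worlds are formulae with A ≤ B iff A ⊢ B, LABС iff C ⊢ A⊗ᴸB, RABC iff C ⊢ A⊗ᴿB, and v(A) = {B : B ⊢ A}, is a SkMBiCA model. -/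
/-!
The formulae, preordered by derivability, form a model in which `v A` is the principal down-set
of `A`; the frame conditions are the axioms read backwards (`LSA` is `α`, `LSLU` is `λ`, `LSRU`
is `ρ`, `LR_reverse` is `γ`, `γ⁻¹`), and the implication clauses are residuation `π`, `πᴿ`.
Since `A ∈ v A` there, validity of `v A ⊆ v B` yields `A ⊢ B`.
-/

theorem ADer.tensR {A B C D : Fma2} (h : ADer A C) (h' : ADer B D) :
    ADer (Fma2.tR A B) (Fma2.tR C D) :=
  (ADer.gammaInv.comp (ADer.tensL h' h)).comp ADer.gamma

def canonicalL (A B C : Fma2) : Prop := ADer C (Fma2.tL A B)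

def canonicalR (A B C : Fma2) : Prop := ADer C (Fma2.tR A B)

def canonicalI : Set Fma2 := {B | ADer B Fma2.I}

def canonicalVal (A : Fma2) : Set Fma2 := {B | ADer B A}

theorem canonical_isSkFrame : IsSkFrame ADer canonicalI canonicalL canonicalR where
  refl _ := ADer.id
  trans := ADer.comp
  I_down := ADer.comp
  L_up₁ h h' := h'.comp (ADer.tensL h ADer.id)
  L_up₂ h h' := h'.comp (ADer.tensL ADer.id h)
  L_down₃ := ADer.comp
  R_up₁ h h' := h'.comp (ADer.tensR h ADer.id)
  R_up₂ h h' := h'.comp (ADer.tensR ADer.id h)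
  R_down₃ := ADer.comp
  LR_reverse _ _ _ := ⟨fun h => h.comp ADer.gamma, fun h => h.comp ADer.gammaInv⟩
  LSA {_ b c _ _} h₁ h₂ :=
    ⟨Fma2.tL b c, ADer.id, (h₂.comp (ADer.tensL h₁ ADer.id)).comp ADer.alpha⟩
  LSLU he h := (h.comp (ADer.tensL he ADer.id)).comp ADer.lam
  LSRU _ := ⟨Fma2.I, ADer.id, ADer.rho⟩

theorem canonical_isValuation :
    IsValuation ADer canonicalI canonicalL canonicalR canonicalVal where
  down _ _ _ := ADer.comp
  unit := rfl
  tensL A B := Set.ext fun _ =>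
    ⟨fun h => ⟨A, ADer.id, B, ADer.id, h⟩,
      fun ⟨_, ha, _, hb, h⟩ => h.comp (ADer.tensL ha hb)⟩
  lolliL A _ := Set.ext fun _ =>
    ⟨fun h _ ha _ hb => (hb.comp (ADer.tensL ADer.id ha)).comp h.piInv,
      fun h => ADer.pi (h A ADer.id _ ADer.id)⟩
  tensR A B := Set.ext fun _ =>
    ⟨fun h => ⟨A, ADer.id, B, ADer.id, h⟩,
      fun ⟨_, ha, _, hb, h⟩ => h.comp (ADer.tensR ha hb)⟩
  lolliR A _ := Set.ext fun _ =>
    ⟨fun h _ ha _ hb => (hb.comp (ADer.tensR ADer.id ha)).comp h.piRInv,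
      fun h => ADer.piR (h A ADer.id _ ADer.id)⟩

theorem ADer.of_forall_models {A B : Fma2}
    (valid : ∀ (W : Type) (le : W → W → Prop) (I : Set W) (L R : W → W → W → Prop)
      (v : Fma2 → Set W), IsSkFrame le I L R → IsValuation le I L R v → v A ⊆ v B) :
    ADer A B :=
  valid Fma2 ADer canonicalI canonicalL canonicalR canonicalVal
    canonical_isSkFrame canonical_isValuation ADer.id

/-- Completeness of SkMBiCA w.r.t. relational models, together with the fact
that the canonical model (worlds are formulae, `A ≤ B` iff `A ⊢ B`,
`L A B C` iff `C ⊢ A ⊗ᴸ B`, `R A B C` iff `C ⊢ A ⊗ᴿ B`,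
`v A = {B : B ⊢ A}`) is a SkMBiCA model. -/
theorem completeness :
    (∀ A B : Fma2,
      (∀ (W : Type) (le : W → W → Prop) (I : Set W) (L R : W → W → W → Prop)
        (v : Fma2 → Set W), IsSkFrame le I L R → IsValuation le I L R v →
        v A ⊆ v B) →
      ADer A B) ∧
    IsSkFrame (W := Fma2) ADer {B | ADer B Fma2.I}
      (fun A B C => ADer C (Fma2.tL A B)) (fun A B C => ADer C (Fma2.tR A B)) ∧
    IsValuation (W := Fma2) ADer {B | ADer B Fma2.I}
      (fun A B C => ADer C (Fma2.tL A B)) (fun A B C => ADer C (Fma2.tR A B))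
      (fun A => {B | ADer B A}) := by
  exact ⟨fun _ _ => ADer.of_forall_models, canonical_isSkFrame, canonical_isValuation⟩
end

section
/- For any preordered ternary frame ⟨W, ≤, I, L⟩, the structural law α is valid (for all valuations v and formulae A,B,C, v((A⊗ᴸB)⊗ᴸC) ⊆ v(A⊗ᴸ(B⊗ᴸC))) if and only if L satisfies left skew associativity: for all a,b,c,d,x, Labx and Lxcd imply there exists y with Lbcy and Layd. -/
section Frames

variable {W : Type}

/-- `IsTernaryFrame le I L` : ⟨W, ≤, I, L⟩ is a preordered ternary frame with a
downwards closed subset `I` and a ternary relation `L` upwards closed in its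
first two arguments and downwards closed in the third. -/
structure IsTernaryFrame (le : W → W → Prop) (I : Set W)
    (L : W → W → W → Prop) : Prop where
  refl : ∀ a, le a a
  trans : ∀ {a b c}, le a b → le b c → le a c
  I_down : ∀ {a b}, le a b → b ∈ I → a ∈ I
  L_up₁ : ∀ {a a' b c}, le a a' → L a b c → L a' b c
  L_up₂ : ∀ {a b b' c}, le b b' → L a b c → L a b' c
  L_down₃ : ∀ {a b c c'}, le c' c → L a b c → L a b c'

end Frames

/-! Unfolding `v((A ⊗ᴸ B) ⊗ᴸ C) ⊆ v(A ⊗ᴸ (B ⊗ᴸ C))`, a point `d` with `L a b x` and `L x c d`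
must be reached as `L a y d` with `L b c y`: this is exactly what left skew associativity provides.
Conversely, the law at atoms valued `a↓`, `b↓`, `c↓` gives such a `y` for some `a' ≤ a`, `b' ≤ b`,
`c' ≤ c`, and upward closure of `L` in its first two arguments moves it back to `a`, `b`, `c`. -/

section LeftSkewAssoc

variable {W : Type}

def LeftSkewAssoc (L : W → W → W → Prop) : Prop :=
  ∀ a b c d x, L a b x → L x c d → ∃ y, L b c y ∧ L a y d

def tensorSet (L : W → W → W → Prop) (S T : Set W) : Set W :=
  {c | ∃ a ∈ S, ∃ b ∈ T, L a b c}

def Fma2.tensorVal (L : W → W → W → Prop) (atomVal : ℕ → Set W) : Fma2 → Set W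
  | .atom n => atomVal n
  | .tL A B => tensorSet L (tensorVal L atomVal A) (tensorVal L atomVal B)
  | _ => ∅

variable {le : W → W → Prop} {I : Set W} {L : W → W → W → Prop}

theorem LeftSkewAssoc.tensorSet_assoc_subset (hL : LeftSkewAssoc L)
    (S T U : Set W) : tensorSet L (tensorSet L S T) U ⊆ tensorSet L S (tensorSet L T U) := by
  rintro d ⟨x, ⟨a, ha, b, hb, hab⟩, c, hc, hxc⟩
  obtain ⟨y, hbc, hay⟩ := hL a b c d x hab hxc
  exact ⟨a, ha, y, ⟨b, hb, c, hc, hbc⟩, hay⟩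

theorem IsTernaryFrame.leftSkewAssoc_of_tensorSet_assoc_subset (hF : IsTernaryFrame le I L)
    (h : ∀ a b c, tensorSet L (tensorSet L {w | le w a} {w | le w b}) {w | le w c} ⊆
      tensorSet L {w | le w a} (tensorSet L {w | le w b} {w | le w c})) :
    LeftSkewAssoc L := by
  intro a b c d x hab hxc
  obtain ⟨a', ha', y, ⟨b', hb', c', hc', hbc⟩, hay⟩ :=
    h a b c ⟨x, ⟨a, hF.refl a, b, hF.refl b, hab⟩, c, hF.refl c, hxc⟩
  exact ⟨y, hF.L_up₂ hc' (hF.L_up₁ hb' hbc), hF.L_up₁ ha' hay⟩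

theorem IsTernaryFrame.tensorVal_down (hF : IsTernaryFrame le I L) {atomVal : ℕ → Set W}
    (hatom : ∀ n {a b}, le a b → b ∈ atomVal n → a ∈ atomVal n) :
    ∀ (A : Fma2) {a b}, le a b → b ∈ A.tensorVal L atomVal → a ∈ A.tensorVal L atomVal
  | .atom n, _, _, hab, hb => hatom n hab hb
  | .tL _ _, _, _, hab, ⟨p, hp, q, hq, hL⟩ => ⟨p, hp, q, hq, hF.L_down₃ hab hL⟩
  | .I, _, _, _, hb | .lL _ _, _, _, _, hb | .tR _ _, _, _, _, hb | .lR _ _, _, _, _, hb => hb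

end LeftSkewAssoc

/-- The law α is valid on a preordered ternary frame ⟨W, ≤, I, L⟩ iff `L`
satisfies left skew associativity. -/
theorem alpha_valid_iff_LSA (W : Type) (le : W → W → Prop) (I : Set W)
    (L : W → W → W → Prop) (hF : IsTernaryFrame le I L) :
    (∀ v : Fma2 → Set W,
        (∀ (A : Fma2) {a b}, le a b → b ∈ v A → a ∈ v A) →
        (∀ A B, v (Fma2.tL A B) = {c | ∃ a ∈ v A, ∃ b ∈ v B, L a b c}) →
        ∀ A B C : Fma2,
          v (Fma2.tL (Fma2.tL A B) C) ⊆ v (Fma2.tL A (Fma2.tL B C))) ↔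
    (∀ a b c d x, L a b x → L x c d → ∃ y, L b c y ∧ L a y d) := by
  constructor
  · intro hval
    refine hF.leftSkewAssoc_of_tensorSet_assoc_subset fun a b c => ?_
    let atomVal : ℕ → Set W := fun n => {w | le w ([a, b, c].getD n c)}
    have hatom : ∀ n {p q}, le p q → q ∈ atomVal n → p ∈ atomVal n :=
      fun _ _ _ hpq hq => hF.trans hpq hq
    exact hval (Fma2.tensorVal L atomVal) (hF.tensorVal_down hatom) (fun _ _ => rfl)
      (.atom 0) (.atom 1) (.atom 2)
  · intro hL v _ htL A B C
    simp only [htL]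
    exact LeftSkewAssoc.tensorSet_assoc_subset hL _ _ _
end

section
/- For any preordered ternary frame ⟨W, ≤, I, L⟩, the structural law λ is valid (for all v and A, v(I⊗ᴸA) ⊆ v(A)) if and only if L satisfies left skew left unitality: for all a,b ∈ W and e ∈ I, Leab implies b ≤ a. Similarly, ρ is valid (v(A) ⊆ v(A⊗ᴸI)) if and only if L satisfies left skew right unitality: for all a ∈ W there exists e ∈ I with Laea. -/
/-!
Soundness of λ and ρ is immediate from the clauses for `I` and `⊗ᴸ` together with
downward closure of `v A`. For the converses, evaluate the atom `p` at the principal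
downset `↓a` and extend to all formulae using only the clauses for `I` and `⊗ᴸ`:
`λ` at `p` turns `L e a b` into `b ≤ a`, and `ρ` at `p` puts `a` into `v (p ⊗ᴸ I)`,
which yields `L x e a` with `x ≤ a`, hence `L a e a` by upward closure.
-/

section Valuations

variable {W : Type} {le : W → W → Prop} {I : Set W} {L : W → W → W → Prop}

structure IsValuation_s16 (le : W → W → Prop) (I : Set W) (L : W → W → W → Prop)
    (v : Fma2 → Set W) : Prop where
  down : ∀ (A : Fma2) {a b}, le a b → b ∈ v A → a ∈ v A
  unit : v Fma2.I = I
  tensor : ∀ A B, v (Fma2.tL A B) = {c | ∃ a ∈ v A, ∃ b ∈ v B, L a b c}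

theorem forall_isValuation_iff (P : (Fma2 → Set W) → Prop) :
    (∀ v, IsValuation_s16 le I L v → P v) ↔
      ∀ v : Fma2 → Set W, (∀ (A : Fma2) {a b}, le a b → b ∈ v A → a ∈ v A) →
        v Fma2.I = I →
        (∀ A B, v (Fma2.tL A B) = {c | ∃ a ∈ v A, ∃ b ∈ v B, L a b c}) → P v :=
  forall_congr' fun _ =>
    ⟨fun h hd hu ht => h ⟨hd, hu, ht⟩, fun h hv => h hv.down hv.unit hv.tensor⟩

def valOfAtoms (I : Set W) (L : W → W → W → Prop) (f : ℕ → Set W) : Fma2 → Set W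
  | Fma2.atom n => f n
  | Fma2.I => I
  | Fma2.tL A B => {c | ∃ a ∈ valOfAtoms I L f A, ∃ b ∈ valOfAtoms I L f B, L a b c}
  | Fma2.lL _ _ => ∅
  | Fma2.tR _ _ => ∅
  | Fma2.lR _ _ => ∅

theorem isValuation_valOfAtoms (hF : IsTernaryFrame le I L) {f : ℕ → Set W}
    (hf : ∀ n {a b}, le a b → b ∈ f n → a ∈ f n) :
    IsValuation_s16 le I L (valOfAtoms I L f) where
  down A := by
    induction A with
    | atom n => exact hf n
    | I => exact hF.I_down
    | tL A B _ _ =>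
        rintro a b hab ⟨x, hx, y, hy, hL⟩
        exact ⟨x, hx, y, hy, hF.L_down₃ hab hL⟩
    | lL | tR | lR => exact fun _ hb => hb.elim
  unit := rfl
  tensor _ _ := rfl

theorem isValuation_principal (hF : IsTernaryFrame le I L) (a : W) :
    IsValuation_s16 le I L (valOfAtoms I L fun _ => {x | le x a}) :=
  isValuation_valOfAtoms hF fun _ _ _ hxy hy => hF.trans hxy hy

theorem lambda_valid_iff (hF : IsTernaryFrame le I L) :
    (∀ v, IsValuation_s16 le I L v → ∀ A, v (Fma2.tL Fma2.I A) ⊆ v A) ↔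
      ∀ a b e, e ∈ I → L e a b → le b a := by
  constructor
  · intro hlam a b e he hL
    exact hlam _ (isValuation_principal hF a) (Fma2.atom 0) ⟨e, he, a, hF.refl a, hL⟩
  · intro hU v hv A c hc
    rw [hv.tensor, hv.unit] at hc
    obtain ⟨e, he, a, ha, hL⟩ := hc
    exact hv.down A (hU a c e he hL) ha

theorem rho_valid_iff (hF : IsTernaryFrame le I L) :
    (∀ v, IsValuation_s16 le I L v → ∀ A, v A ⊆ v (Fma2.tL A Fma2.I)) ↔
      ∀ a, ∃ e ∈ I, L a e a := by
  constructor
  · intro hrho a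
    obtain ⟨x, hxa, e, he, hL⟩ :=
      hrho _ (isValuation_principal hF a) (Fma2.atom 0) (hF.refl a)
    exact ⟨e, he, hF.L_up₁ hxa hL⟩
  · intro hU v hv A a ha
    obtain ⟨e, he, hL⟩ := hU a
    rw [hv.tensor, hv.unit]
    exact ⟨a, ha, e, he, hL⟩

end Valuations

/-- λ is valid iff L satisfies left skew left unitality, and ρ is valid iff L
satisfies left skew right unitality. -/
theorem lam_rho_valid_iff_unitality (W : Type) (le : W → W → Prop) (I : Set W)
    (L : W → W → W → Prop) (hF : IsTernaryFrame le I L) :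
    ((∀ v : Fma2 → Set W,
        (∀ (A : Fma2) {a b}, le a b → b ∈ v A → a ∈ v A) →
        v Fma2.I = I →
        (∀ A B, v (Fma2.tL A B) = {c | ∃ a ∈ v A, ∃ b ∈ v B, L a b c}) →
        ∀ A : Fma2, v (Fma2.tL Fma2.I A) ⊆ v A) ↔
      (∀ a b e, e ∈ I → L e a b → le b a)) ∧
    ((∀ v : Fma2 → Set W,
        (∀ (A : Fma2) {a b}, le a b → b ∈ v A → a ∈ v A) →
        v Fma2.I = I →
        (∀ A B, v (Fma2.tL A B) = {c | ∃ a ∈ v A, ∃ b ∈ v B, L a b c}) →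
        ∀ A : Fma2, v A ⊆ v (Fma2.tL A Fma2.I)) ↔
      (∀ a, ∃ e ∈ I, L a e a)) :=
  ⟨(forall_isValuation_iff _).symm.trans (lambda_valid_iff hF),
    (forall_isValuation_iff _).symm.trans (rho_valid_iff hF)⟩
end

section
/- For any preordered ternary frame ⟨W, ≤, I, L⟩, left skew associativity of L holds if and only if the law L (the internal composition law) is valid: for all valuations and formulae A,B,C, v(B⊸ᴸC) ⊆ v((A⊸ᴸB)⊸ᴸ(A⊸ᴸC)). -/
/-!
Left skew associativity is exactly what the composition law needs. Given `c ∈ B⊸ᴸC`,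
`f ∈ A⊸ᴸB`, `L c f e`, `a ∈ A` and `L e a d`, associating the two steps the other way gives
`y` with `L f a y` (so `y ∈ B`) and `L c y d` (so `d ∈ C`). Conversely, for `L a b x` and
`L x c d` take `A = ↓c`, `B = ↓b ⊗ᴸ ↓c` and `C = ↓a ⊗ᴸ B`: then `a ∈ B⊸ᴸC` and `b ∈ A⊸ᴸB`, so
the law puts `d` in `C`, and unfolding the two tensors produces the reassociating witness.
Since any down-closed sets are the values of atoms, the law for formulae is the same as the law
for down-closed sets.
-/

section Semantics

variable {W : Type}

def IsDownClosed (le : W → W → Prop) (X : Set W) : Prop :=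
  ∀ {a b}, le a b → b ∈ X → a ∈ X

def lImp (L : W → W → W → Prop) (X Y : Set W) : Set W :=
  {c | ∀ a ∈ X, ∀ b, L c a b → b ∈ Y}

def lTensor (L : W → W → W → Prop) (X Y : Set W) : Set W :=
  {c | ∃ a ∈ X, ∃ b ∈ Y, L a b c}

theorem lImp_subset_lImp_lImp_of_leftSkewAssoc {L : W → W → W → Prop}
    (hL : LeftSkewAssoc L) (X Y Z : Set W) :
    lImp L Y Z ⊆ lImp L (lImp L X Y) (lImp L X Z) := by
  intro c hc f hf x hcfx a ha d hxad
  obtain ⟨y, hfay, hcyd⟩ := hL c f a d x hcfx hxad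
  exact hc y (hf a ha y hfay) d hcyd

/-- The valuation with the given atoms; nothing is imposed on the right connectives. -/
def canonVal (I : Set W) (L : W → W → W → Prop) (atoms : ℕ → Set W) : Fma2 → Set W
  | Fma2.atom n => atoms n
  | Fma2.I => I
  | Fma2.tL A B => lTensor L (canonVal I L atoms A) (canonVal I L atoms B)
  | Fma2.lL A B => lImp L (canonVal I L atoms A) (canonVal I L atoms B)
  | Fma2.tR _ _ => ∅
  | Fma2.lR _ _ => ∅

namespace IsTernaryFrame

variable {le : W → W → Prop} {I : Set W} {L : W → W → W → Prop}

theorem isDownClosed_down (hF : IsTernaryFrame le I L) (c : W) :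
    IsDownClosed le {w | le w c} :=
  fun hab hbc => hF.trans hab hbc

theorem isDownClosed_lTensor (hF : IsTernaryFrame le I L) (X Y : Set W) :
    IsDownClosed le (lTensor L X Y) := by
  rintro c c' hcc' ⟨a, ha, b, hb, habc'⟩
  exact ⟨a, ha, b, hb, hF.L_down₃ hcc' habc'⟩

theorem isDownClosed_lImp (hF : IsTernaryFrame le I L) (X Y : Set W) :
    IsDownClosed le (lImp L X Y) :=
  fun hcc' hc' a ha b hcab => hc' a ha b (hF.L_up₁ hcc' hcab)

theorem leftSkewAssoc_of_lImp_subset (hF : IsTernaryFrame le I L)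
    (hcomp : ∀ X Y Z, IsDownClosed le X → IsDownClosed le Y → IsDownClosed le Z →
      lImp L Y Z ⊆ lImp L (lImp L X Y) (lImp L X Z)) :
    LeftSkewAssoc L := by
  intro a b c d x habx hxcd
  set X : Set W := {w | le w c}
  set Y := lTensor L {w | le w b} X
  set Z := lTensor L {w | le w a} Y
  have ha : a ∈ lImp L Y Z := fun y hy w hayw => ⟨a, hF.refl a, y, hy, hayw⟩
  have hb : b ∈ lImp L X Y := fun c' hc' w hbc'w => ⟨b, hF.refl b, c', hc', hbc'w⟩
  have hd : d ∈ Z :=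
    hcomp X Y Z (hF.isDownClosed_down c) (hF.isDownClosed_lTensor _ _)
      (hF.isDownClosed_lTensor _ _) ha b hb x habx c (hF.refl c) d hxcd
  obtain ⟨a', ha', y, ⟨b', hb', c', hc', hb'c'y⟩, ha'yd⟩ := hd
  exact ⟨y, hF.L_up₁ hb' (hF.L_up₂ hc' hb'c'y), hF.L_up₁ ha' ha'yd⟩

theorem leftSkewAssoc_iff_lImp_subset (hF : IsTernaryFrame le I L) :
    LeftSkewAssoc L ↔ ∀ X Y Z, IsDownClosed le X → IsDownClosed le Y → IsDownClosed le Z →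
      lImp L Y Z ⊆ lImp L (lImp L X Y) (lImp L X Z) :=
  ⟨fun hL X Y Z _ _ _ => lImp_subset_lImp_lImp_of_leftSkewAssoc hL X Y Z,
    hF.leftSkewAssoc_of_lImp_subset⟩

theorem isDownClosed_canonVal (hF : IsTernaryFrame le I L) {atoms : ℕ → Set W}
    (hatoms : ∀ n, IsDownClosed le (atoms n)) (A : Fma2) :
    IsDownClosed le (canonVal I L atoms A) := by
  induction A with
  | atom n => exact hatoms n
  | I => exact hF.I_down
  | tL A B _ _ => exact hF.isDownClosed_lTensor _ _
  | lL A B _ _ => exact hF.isDownClosed_lImp _ _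
  | tR _ _ _ _ | lR _ _ _ _ => exact fun _ hb => hb.elim

end IsTernaryFrame

end Semantics

/-- Left skew associativity of `L` holds iff the internal composition law `L`
(`B⊸ᴸC ⊢ (A⊸ᴸB)⊸ᴸ(A⊸ᴸC)`) is valid. -/
theorem LSA_iff_L_law_valid (W : Type) (le : W → W → Prop) (I : Set W)
    (L : W → W → W → Prop) (hF : IsTernaryFrame le I L) :
    (∀ a b c d x, L a b x → L x c d → ∃ y, L b c y ∧ L a y d) ↔
    (∀ v : Fma2 → Set W,
        (∀ (A : Fma2) {a b}, le a b → b ∈ v A → a ∈ v A) →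
        (∀ A B, v (Fma2.tL A B) = {c | ∃ a ∈ v A, ∃ b ∈ v B, L a b c}) →
        (∀ A B, v (Fma2.lL A B) = {c | ∀ a ∈ v A, ∀ b, L c a b → b ∈ v B}) →
        ∀ A B C : Fma2,
          v (Fma2.lL B C) ⊆ v (Fma2.lL (Fma2.lL A B) (Fma2.lL A C))) := by
  refine (hF.leftSkewAssoc_iff_lImp_subset).trans ⟨fun hcomp v hv _ hlL A B C => ?_, ?_⟩
  · simp only [hlL]
    exact hcomp (v A) (v B) (v C) (hv A) (hv B) (hv C)
  · intro hlaw X Y Z hX hY hZ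
    let atoms : ℕ → Set W := fun | 0 => X | 1 => Y | _ => Z
    have hatoms : ∀ n, IsDownClosed le (atoms n) := fun | 0 => hX | 1 => hY | _ + 2 => hZ
    exact hlaw (canonVal I L atoms) (hF.isDownClosed_canonVal hatoms) (fun _ _ => rfl)
      (fun _ _ => rfl) (Fma2.atom 0) (Fma2.atom 1) (Fma2.atom 2)
end

section
/- For any preordered ternary frame ⟨W, ≤, I, R⟩, right skew left unitality of R (for all a ∈ W there exists e ∈ I with Reaa) holds if and only if the jᴿ law is valid: for all valuations v and formulae A,B, if I ⊆ v(A⊸ᴿB) then v(A) ⊆ v(B). -/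
/-! If `e ∈ I` with `R e a a`, then `e ∈ v(A ⊸ᴿ B)` sends `a ∈ v(A)` to `a ∈ v(B)`. Conversely,
fix `a` and interpret the atom `p₀` as the principal down-set `↓a` and every other atom as
`{b | ∃ e ∈ I, R e a b}`. Upward closure of `R` in its second argument gives `I ⊆ v(p₀ ⊸ᴿ p₁)`,
so the `jᴿ` law applied to `a ∈ v(p₀)` yields `a ∈ v(p₁)`, which is right skew left unitality
at `a`. -/

section Frames

variable {W : Type} {le : W → W → Prop} {I : Set W} {R : W → W → W → Prop}

theorem subset_of_forall_rslu (hR : ∀ a, ∃ e ∈ I, R e a a) (v : Fma2 → Set W)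
    (hlR : ∀ A B, v (Fma2.lR A B) = {c | ∀ a ∈ v A, ∀ b, R c a b → b ∈ v B})
    (A B : Fma2) (hI : I ⊆ v (Fma2.lR A B)) : v A ⊆ v B := by
  intro a ha
  obtain ⟨e, he, hea⟩ := hR a
  have he' := hI he
  rw [hlR] at he'
  exact he' a ha a hea

/-- Only `⊸ᴿ` matters for the countermodel, so the other connectives are sent to `∅`. -/
def Fma2.interp (R : W → W → W → Prop) (val : ℕ → Set W) : Fma2 → Set W
  | .atom n => val n
  | .lR A B => {c | ∀ a ∈ interp R val A, ∀ b, R c a b → b ∈ interp R val B}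
  | _ => ∅

theorem Fma2.interp_lR (val : ℕ → Set W) (A B : Fma2) :
    interp R val (.lR A B) = {c | ∀ a ∈ interp R val A, ∀ b, R c a b → b ∈ interp R val B} :=
  rfl

theorem Fma2.interp_down (hR : ∀ {a a' b c}, le a a' → R a b c → R a' b c) {val : ℕ → Set W}
    (hval : ∀ n {a b}, le a b → b ∈ val n → a ∈ val n) :
    ∀ (A : Fma2) {a b}, le a b → b ∈ interp R val A → a ∈ interp R val A
  | .atom n, _, _, hab, hb => hval n hab hb
  | .lR _ _, _, _, hab, hb => fun x hx c hac => hb x hx c (hR hab hac)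
  | .I, _, _, _, hb | .tL _ _, _, _, _, hb | .lL _ _, _, _, _, hb | .tR _ _, _, _, _, hb =>
    hb.elim

def unitCountermodelVal (le : W → W → Prop) (I : Set W) (R : W → W → W → Prop) (a : W) :
    ℕ → Set W :=
  fun n => if n = 0 then {x | le x a} else {b | ∃ e ∈ I, R e a b}

theorem unitCountermodelVal_down (hF : IsTernaryFrame le I R) (a : W) (n : ℕ) {x y : W}
    (hxy : le x y) (hy : y ∈ unitCountermodelVal le I R a n) :
    x ∈ unitCountermodelVal le I R a n := by
  unfold unitCountermodelVal at hy ⊢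
  split_ifs at hy ⊢
  · exact hF.trans hxy hy
  · obtain ⟨e, he, hey⟩ := hy
    exact ⟨e, he, hF.L_down₃ hxy hey⟩

theorem subset_interp_lR_unitCountermodelVal (hF : IsTernaryFrame le I R) (a : W) :
    I ⊆ Fma2.interp R (unitCountermodelVal le I R a) (.lR (.atom 0) (.atom 1)) := by
  intro e he x hxa b hexb
  have hxa : le x a := by simpa [Fma2.interp, unitCountermodelVal] using hxa
  show b ∈ unitCountermodelVal le I R a 1
  simpa [unitCountermodelVal] using ⟨e, he, hF.L_up₂ hxa hexb⟩

theorem rslu_of_forall_subset (hF : IsTernaryFrame le I R)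
    (hjR : ∀ v : Fma2 → Set W,
        (∀ (A : Fma2) {a b}, le a b → b ∈ v A → a ∈ v A) →
        (∀ A B, v (Fma2.lR A B) = {c | ∀ a ∈ v A, ∀ b, R c a b → b ∈ v B}) →
        ∀ A B : Fma2, I ⊆ v (Fma2.lR A B) → v A ⊆ v B)
    (a : W) : ∃ e ∈ I, R e a a := by
  have ha : a ∈ unitCountermodelVal le I R a 0 := by
    simpa [unitCountermodelVal] using hF.refl a
  have hmem := hjR _ (Fma2.interp_down (R := R) hF.L_up₁ (unitCountermodelVal_down hF a))
    (Fma2.interp_lR _) _ _ (subset_interp_lR_unitCountermodelVal hF a) ha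
  simpa [Fma2.interp, unitCountermodelVal] using hmem

end Frames

/-- Right skew left unitality of `R` holds iff the `jᴿ` law is valid:
if `I ⊆ v(A ⊸ᴿ B)` then `v(A) ⊆ v(B)`. -/
theorem RSLU_iff_jR_valid (W : Type) (le : W → W → Prop) (I : Set W)
    (R : W → W → W → Prop) (hF : IsTernaryFrame le I R) :
    (∀ a, ∃ e ∈ I, R e a a) ↔
    (∀ v : Fma2 → Set W,
        (∀ (A : Fma2) {a b}, le a b → b ∈ v A → a ∈ v A) →
        (∀ A B, v (Fma2.lR A B) = {c | ∀ a ∈ v A, ∀ b, R c a b → b ∈ v B}) →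
        ∀ A B : Fma2, I ⊆ v (Fma2.lR A B) → v A ⊆ v B) :=
  ⟨fun hR v _ hlR => subset_of_forall_rslu hR v hlR, rslu_of_forall_subset hF⟩
end
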